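/- arXiv:2104.07895 — 13 statements merged into one kernel-verified Lean document; each statement's English description precedes it below -/
import Mathlib

section
/- Every point x ∈ Λ_{2m} satisfies ‖x − u‖² ≥ m/4, i.e. the distance from x to u is at least √m / 2; in other words, the open ball of radius √m / 2 centered at u contains no point of the lattice D_{2m}^*. -/
lemma half_sq (a b : ℝ) (ha : ∃ k : ℤ, a = (k : ℝ)) (hb : ∃ k : ℤ, b = (k : ℝ) + 1/2) :
    1/4 ≤ (a - b) ^ 2 := by
  obtain ⟨k, rfl⟩ := ha
  obtain ⟨l, rfl⟩ := hb
  have h : ((k - l : ℤ) : ℝ) ≤ 0 ∨ 1 ≤ ((k - l : ℤ) : ℝ) := by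
    rcases le_or_gt (k - l) 0 with h | h
    · left; exact_mod_cast h
    · right; exact_mod_cast h
  push_cast at h ⊢
  rcases h with h | h <;> nlinarith

/-- Every point of the lattice `D_{2m}^*` is at squared distance at least `m/4`
(i.e. at distance at least `√m / 2`) from a point `u` having `m` half-integer and
`m` integer coordinates. -/
theorem stmt_1 (m : ℕ) (hm : 1 ≤ m)
    (Λ : Set (EuclideanSpace ℝ (Fin (2 * m))))
    (hΛ : Λ = {x : EuclideanSpace ℝ (Fin (2 * m)) |
      (∀ i, ∃ k : ℤ, x i = (k : ℝ)) ∨ (∀ i, ∃ k : ℤ, x i = (k : ℝ) + 1/2)})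
    (S : Finset (Fin (2 * m))) (hS : S.card = m)
    (u : EuclideanSpace ℝ (Fin (2 * m)))
    (huS : ∀ i ∈ S, ∃ k : ℤ, u i = (k : ℝ) + 1/2)
    (huI : ∀ i ∉ S, ∃ k : ℤ, u i = (k : ℝ)) :
    ∀ x ∈ Λ, (m : ℝ) / 4 ≤ ‖x - u‖ ^ 2 ∧ Real.sqrt m / 2 ≤ dist x u := by
  intro x hx
  rw [hΛ] at hx
  have key : (m : ℝ) / 4 ≤ ∑ i, (x i - u i) ^ 2 := by
    rcases hx with hint | hhalf
    · calc (m : ℝ) / 4 = ∑ _i ∈ S, (1 : ℝ)/4 := by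
            rw [Finset.sum_const, hS]; ring
        _ ≤ ∑ i ∈ S, (x i - u i) ^ 2 := by
            apply Finset.sum_le_sum
            intro i hi
            exact half_sq _ _ (hint i) (huS i hi)
        _ ≤ ∑ i, (x i - u i) ^ 2 := by
            apply Finset.sum_le_sum_of_subset_of_nonneg (Finset.subset_univ S)
            intro i _ _; positivity
    · have hcard : Sᶜ.card = m := by
        rw [Finset.card_compl, hS, Fintype.card_fin]; omega
      calc (m : ℝ) / 4 = ∑ _i ∈ Sᶜ, (1 : ℝ)/4 := by
            rw [Finset.sum_const, hcard]; ring
        _ ≤ ∑ i ∈ Sᶜ, (x i - u i) ^ 2 := by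
            apply Finset.sum_le_sum
            intro i hi
            have := half_sq (u i) (x i) (huI i (Finset.mem_compl.mp hi)) (hhalf i)
            nlinarith [this]
        _ ≤ ∑ i, (x i - u i) ^ 2 := by
            apply Finset.sum_le_sum_of_subset_of_nonneg (Finset.subset_univ Sᶜ)
            intro i _ _; positivity
  have hnorm : ‖x - u‖ ^ 2 = ∑ i, (x i - u i) ^ 2 := by
    rw [EuclideanSpace.norm_eq, Real.sq_sqrt (by positivity)]
    congr 1; ext i
    simp [sq_abs]
  have h1 : (m : ℝ) / 4 ≤ ‖x - u‖ ^ 2 := by rw [hnorm]; exact key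
  refine ⟨h1, ?_⟩
  rw [dist_eq_norm]
  have h2 : (Real.sqrt m / 2) ^ 2 = (m : ℝ) / 4 := by
    rw [div_pow, Real.sq_sqrt (by positivity)]; norm_num
  nlinarith [norm_nonneg (x - u), Real.sqrt_nonneg (m : ℝ)]
end

section
/- The set of points x ∈ Λ_{2m} with ‖x − u‖ ≤ √m / 2 equals B_int ∪ B_half; moreover every point of B_int ∪ B_half is at distance exactly √m / 2 from u, and B_int ∪ B_half has exactly 2^(m+1) elements. -/
/-!
Every point of `Λ_{2m}` differs from `u` by at least `1/2` in each coordinate of `S` (integer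
points) or in each coordinate outside `S` (half-integer points), so its squared distance to `u`
is at least `m / 4`, with equality exactly when it is `u` moved by `± 1/2` in those `m`
coordinates and fixed elsewhere. Those are the vertices of two `m`-cubes, which share no point.
-/

open Finset

lemma abs_sub_eq_half_iff {r s : ℝ} : |r - s| = 1 / 2 ↔ r = s + 1 / 2 ∨ r = s - 1 / 2 := by
  rw [abs_eq (by norm_num)]
  constructor <;> rintro (h | h) <;> [left; right; left; right] <;> linarith

lemma one_half_le_abs_int_add_half (k : ℤ) : (1 / 2 : ℝ) ≤ |(k : ℝ) + 1 / 2| := by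
  rcases Int.lt_or_le k 0 with hk | hk
  · have hk' : (k : ℝ) ≤ -1 := by exact_mod_cast Int.le_sub_one_of_lt hk
    rw [abs_of_neg (by linarith)]
    linarith
  · have hk' : (0 : ℝ) ≤ k := by exact_mod_cast hk
    rw [abs_of_nonneg (by linarith)]
    linarith

lemma one_half_le_abs_int_sub_int_add_half (a b : ℤ) :
    (1 / 2 : ℝ) ≤ |(a : ℝ) - ((b : ℝ) + 1 / 2)| := by
  have h : (a : ℝ) - ((b : ℝ) + 1 / 2) = ((a - b - 1 : ℤ) : ℝ) + 1 / 2 := by push_cast; ring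
  exact h ▸ one_half_le_abs_int_add_half _

lemma one_half_le_abs_int_add_half_sub_int (a b : ℤ) :
    (1 / 2 : ℝ) ≤ |((a : ℝ) + 1 / 2) - b| := by
  have h : ((a : ℝ) + 1 / 2) - b = ((a - b : ℤ) : ℝ) + 1 / 2 := by push_cast; ring
  exact h ▸ one_half_le_abs_int_add_half _

lemma exists_int_eq_of_abs_sub_int_add_half {r : ℝ} {k : ℤ}
    (h : |r - ((k : ℝ) + 1 / 2)| = 1 / 2) : ∃ j : ℤ, r = j := by
  rcases abs_sub_eq_half_iff.1 h with h | h
  · exact ⟨k + 1, by push_cast; linarith⟩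
  · exact ⟨k, by linarith⟩

lemma exists_int_add_half_eq_of_abs_sub_int {r : ℝ} {k : ℤ} (h : |r - k| = 1 / 2) :
    ∃ j : ℤ, r = j + 1 / 2 := by
  rcases abs_sub_eq_half_iff.1 h with h | h
  · exact ⟨k, h⟩
  · exact ⟨k - 1, by push_cast; linarith⟩

lemma sum_ite_mem_const {ι : Type*} [Fintype ι] [DecidableEq ι] (T : Finset ι) (c : ℝ) :
    ∑ i, (if i ∈ T then c else 0) = #T * c := by
  rw [Fintype.sum_ite_mem, sum_const, nsmul_eq_mul]

lemma dist_le_sqrt_div_two_iff {ι : Type*} [Fintype ι] (x u : EuclideanSpace ℝ ι) (n : ℕ) :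
    dist x u ≤ √n / 2 ↔ ∑ i, (x i - u i) ^ 2 ≤ n / 4 := by
  have hsq : (√n / 2) ^ 2 = n / 4 := by rw [div_pow, Real.sq_sqrt n.cast_nonneg]; norm_num
  have hdist : dist x u ^ 2 = ∑ i, (x i - u i) ^ 2 := by
    rw [EuclideanSpace.dist_eq, Real.sq_sqrt (by positivity)]
    simp only [Real.dist_eq, sq_abs]
  rw [← sq_le_sq₀ dist_nonneg (by positivity), hsq, hdist]

section cubeVertices

variable {ι : Type*}

def cubeVertices (T : Finset ι) (u : EuclideanSpace ℝ ι) : Set (EuclideanSpace ℝ ι) :=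
  {x | (∀ i ∉ T, x i = u i) ∧ (∀ i ∈ T, |x i - u i| = 1 / 2)}

variable {T : Finset ι} {u x : EuclideanSpace ℝ ι}

lemma cubeVertices_compl [Fintype ι] [DecidableEq ι] :
    cubeVertices Tᶜ u =
      {x | (∀ i ∈ T, x i = u i) ∧ (∀ i ∉ T, |x i - u i| = 1 / 2)} := by
  simp only [cubeVertices, mem_compl, not_not]

lemma sq_sub_eq_of_mem_cubeVertices [DecidableEq ι] (hx : x ∈ cubeVertices T u) (i : ι) :
    (x i - u i) ^ 2 = if i ∈ T then 1 / 4 else 0 := by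
  split_ifs with hi
  · rw [← sq_abs, hx.2 i hi]; norm_num
  · rw [hx.1 i hi, sub_self, sq, zero_mul]

lemma dist_eq_of_mem_cubeVertices [Fintype ι] (hx : x ∈ cubeVertices T u) :
    dist x u = √(#T : ℝ) / 2 := by
  classical
  rw [EuclideanSpace.dist_eq]
  simp only [Real.dist_eq, sq_abs, sq_sub_eq_of_mem_cubeVertices hx, sum_ite_mem_const]
  rw [show (#T : ℝ) * (1 / 4) = #T * (1 / 2) ^ 2 by norm_num,
    Real.sqrt_mul (by positivity), Real.sqrt_sq (by norm_num)]
  ring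

/-- The coordinates in `T` alone already contribute `#T / 4` to the squared distance, so there
is no room for any further deviation. -/
lemma mem_cubeVertices_of_dist_le [Fintype ι] (hT : ∀ i ∈ T, 1 / 2 ≤ |x i - u i|)
    (hx : dist x u ≤ √(#T : ℝ) / 2) : x ∈ cubeVertices T u := by
  classical
  rw [dist_le_sqrt_div_two_iff] at hx
  set excess : ι → ℝ := fun i => (x i - u i) ^ 2 - if i ∈ T then 1 / 4 else 0
  have excess_nonneg : ∀ i, 0 ≤ excess i := by
    intro i
    simp only [excess]
    split_ifs with hi
    · have := hT i hi
      nlinarith [sq_abs (x i - u i)]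
    · simp [sq_nonneg]
  have sum_excess : ∑ i, excess i = 0 := by
    refine le_antisymm ?_ (sum_nonneg fun i _ => excess_nonneg i)
    simp only [excess, sum_sub_distrib, sum_ite_mem_const]
    linarith
  have excess_eq_zero i : excess i = 0 :=
    (sum_eq_zero_iff_of_nonneg fun i _ => excess_nonneg i).1 sum_excess i (mem_univ i)
  refine ⟨fun i hi => ?_, fun i hi => ?_⟩
  · simpa only [excess, if_neg hi, sub_zero, sq_eq_zero_iff, sub_eq_zero] using excess_eq_zero i
  · have h := excess_eq_zero i
    simp only [excess, if_pos hi, sub_eq_zero] at h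
    rw [show (1 / 4 : ℝ) = (1 / 2) ^ 2 by norm_num, sq_eq_sq_iff_abs_eq_abs] at h
    rw [h]
    norm_num

lemma exists_int_eq_of_mem_cubeVertices (huT : ∀ i ∈ T, ∃ k : ℤ, u i = k + 1 / 2)
    (hu : ∀ i ∉ T, ∃ k : ℤ, u i = k) (hx : x ∈ cubeVertices T u) (i : ι) :
    ∃ k : ℤ, x i = k := by
  by_cases hi : i ∈ T
  · obtain ⟨k, hk⟩ := huT i hi
    exact exists_int_eq_of_abs_sub_int_add_half (hk ▸ hx.2 i hi)
  · exact hx.1 i hi ▸ hu i hi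

lemma exists_int_add_half_eq_of_mem_cubeVertices (huT : ∀ i ∈ T, ∃ k : ℤ, u i = k)
    (hu : ∀ i ∉ T, ∃ k : ℤ, u i = k + 1 / 2) (hx : x ∈ cubeVertices T u) (i : ι) :
    ∃ k : ℤ, x i = k + 1 / 2 := by
  by_cases hi : i ∈ T
  · obtain ⟨k, hk⟩ := huT i hi
    exact exists_int_add_half_eq_of_abs_sub_int (hk ▸ hx.2 i hi)
  · exact hx.1 i hi ▸ hu i hi

lemma disjoint_cubeVertices_compl [Fintype ι] [DecidableEq ι] (hT : T.Nonempty) :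
    Disjoint (cubeVertices T u) (cubeVertices Tᶜ u) := by
  obtain ⟨i, hi⟩ := hT
  refine Set.disjoint_left.2 fun x hx hx' => ?_
  have h := hx.2 i hi
  rw [hx'.1 i (by simpa using hi), sub_self, abs_zero] at h
  norm_num at h

lemma ncard_cubeVertices [Fintype ι] (T : Finset ι) (u : EuclideanSpace ℝ ι) :
    (cubeVertices T u).ncard = 2 ^ #T := by
  classical
  let coords : ι → Finset ℝ := fun i => if i ∈ T then {u i + 1 / 2, u i - 1 / 2} else {u i}
  have hcube :
      cubeVertices T u = WithLp.ofLp ⁻¹' (Fintype.piFinset coords : Set (ι → ℝ)) := by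
    ext x
    simp only [cubeVertices, Set.mem_ofPred_eq, Set.mem_preimage, Fintype.coe_piFinset,
      Set.mem_pi, Set.mem_univ, true_implies, coords, mem_coe]
    refine ⟨fun ⟨h0, h1⟩ i => ?_, fun h => ⟨fun i hi => ?_, fun i hi => ?_⟩⟩
    · by_cases hi : i ∈ T
      · simpa only [if_pos hi, mem_insert, mem_singleton] using abs_sub_eq_half_iff.1 (h1 i hi)
      · simpa only [if_neg hi, mem_singleton] using h0 i hi
    · simpa only [if_neg hi, mem_singleton] using h i
    · simpa only [if_pos hi, abs_sub_eq_half_iff, mem_insert, mem_singleton] using h i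
  have hcard : ∀ i ∈ T, #({u i + 1 / 2, u i - 1 / 2} : Finset ℝ) = 2 := fun i _ =>
    card_pair (by linarith)
  rw [hcube, Set.ncard_preimage_of_injective_subset_range (WithLp.ofLp_injective 2)
    (by simp [(WithLp.ofLp_surjective 2).range_eq]), Set.ncard_coe_finset,
    Fintype.card_piFinset]
  simp only [coords, apply_ite card, card_singleton]
  rw [Fintype.prod_ite_mem, prod_congr rfl hcard, prod_const]

end cubeVertices

/-- The points of the lattice `D_{2m}^*` at distance at most `√m / 2` from `u` are exactly
the `2^(m+1)` points `B_int ∪ B_half` (the vertices of the free sum of two `m`-cubes),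
all of which lie at distance exactly `√m / 2` from `u`. -/
theorem stmt_2 (m : ℕ) (hm : 1 ≤ m)
    (Λ : Set (EuclideanSpace ℝ (Fin (2 * m))))
    (hΛ : Λ = {x : EuclideanSpace ℝ (Fin (2 * m)) |
      (∀ i, ∃ k : ℤ, x i = (k : ℝ)) ∨ (∀ i, ∃ k : ℤ, x i = (k : ℝ) + 1/2)})
    (S : Finset (Fin (2 * m))) (hS : S.card = m)
    (u : EuclideanSpace ℝ (Fin (2 * m)))
    (huS : ∀ i ∈ S, ∃ k : ℤ, u i = (k : ℝ) + 1/2)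
    (huI : ∀ i ∉ S, ∃ k : ℤ, u i = (k : ℝ))
    (Bhalf Bint : Set (EuclideanSpace ℝ (Fin (2 * m))))
    (hBhalf : Bhalf = {x : EuclideanSpace ℝ (Fin (2 * m)) |
      (∀ i ∈ S, x i = u i) ∧ (∀ i ∉ S, |x i - u i| = 1/2)})
    (hBint : Bint = {x : EuclideanSpace ℝ (Fin (2 * m)) |
      (∀ i ∉ S, x i = u i) ∧ (∀ i ∈ S, |x i - u i| = 1/2)}) :
    {x ∈ Λ | ‖x - u‖ ≤ Real.sqrt m / 2} = Bint ∪ Bhalf ∧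
    (∀ x ∈ Bint ∪ Bhalf, dist x u = Real.sqrt m / 2) ∧
    (Bint ∪ Bhalf).ncard = 2 ^ (m + 1) := by
  have hSc : #Sᶜ = m := by rw [card_compl, Fintype.card_fin, hS]; omega
  have huSc : ∀ i ∉ Sᶜ, ∃ k : ℤ, u i = k + 1 / 2 := fun i hi => huS i (by simpa using hi)
  have huIc : ∀ i ∈ Sᶜ, ∃ k : ℤ, u i = k := fun i hi => huI i (mem_compl.1 hi)
  rw [← cubeVertices_compl] at hBhalf
  change Bint = cubeVertices S u at hBint
  subst hΛ hBhalf hBint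
  have hdist : ∀ x ∈ cubeVertices S u ∪ cubeVertices Sᶜ u, dist x u = √m / 2 := by
    rintro x (hx | hx)
    · rw [dist_eq_of_mem_cubeVertices hx, hS]
    · rw [dist_eq_of_mem_cubeVertices hx, hSc]
  refine ⟨Set.ext fun x => ⟨?_, fun hx => ⟨?_, (dist_eq_norm x u ▸ hdist x hx).le⟩⟩,
    hdist, ?_⟩
  · rintro ⟨hint | hhalf, hle⟩
    · refine Or.inl (mem_cubeVertices_of_dist_le (fun i hi => ?_) (by rwa [hS, dist_eq_norm]))
      obtain ⟨a, ha⟩ := hint i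
      obtain ⟨b, hb⟩ := huS i hi
      exact ha ▸ hb ▸ one_half_le_abs_int_sub_int_add_half a b
    · refine Or.inr (mem_cubeVertices_of_dist_le (fun i hi => ?_) (by rwa [hSc, dist_eq_norm]))
      obtain ⟨a, ha⟩ := hhalf i
      obtain ⟨b, hb⟩ := huIc i hi
      exact ha ▸ hb ▸ one_half_le_abs_int_add_half_sub_int a b
  · rcases hx with hx | hx
    · exact Or.inl (exists_int_eq_of_mem_cubeVertices huS huI hx)
    · exact Or.inr (exists_int_add_half_eq_of_mem_cubeVertices huIc huSc hx)
  · have hfinite T : (cubeVertices T u).Finite :=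
      Set.finite_of_ncard_pos (ncard_cubeVertices T u ▸ Nat.two_pow_pos _)
    rw [Set.ncard_union_eq (disjoint_cubeVertices_compl (card_pos.1 (by omega))) (hfinite _)
      (hfinite _), ncard_cubeVertices, ncard_cubeVertices, hS, hSc, pow_succ, mul_two]
end

section
/- Every point x ∈ Λ_{2m+1} satisfies ‖x − u‖² ≥ (4m+1)/16, i.e. the distance from x to u is at least √(4m+1) / 4; in other words, the open ball of radius √(4m+1) / 4 centered at u contains no point of the lattice D_{2m+1}^*. -/
private lemma half_sq_s3 (k : ℤ) : (1/4 : ℝ) ≤ ((k : ℝ) + 1/2) ^ 2 := by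
  rcases Int.lt_or_le k 0 with h | h
  · have : (k : ℝ) ≤ -1 := by exact_mod_cast (by omega : k ≤ -1)
    nlinarith
  · have : (0 : ℝ) ≤ (k : ℝ) := by exact_mod_cast h
    nlinarith

private lemma quarter_sq (k : ℤ) : (1/16 : ℝ) ≤ ((k : ℝ) / 2 + 1/4) ^ 2 := by
  rcases Int.lt_or_le k 0 with h | h
  · have : (k : ℝ) ≤ -1 := by exact_mod_cast (by omega : k ≤ -1)
    nlinarith
  · have : (0 : ℝ) ≤ (k : ℝ) := by exact_mod_cast h
    nlinarith

/-- Every point of the lattice `D_{2m+1}^*` is at squared distance at least `(4m+1)/16`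
(i.e. at distance at least `√(4m+1) / 4`) from a point `u` with `m` half-integer
coordinates, `m` integer coordinates, and one coordinate in `1/4 + (1/2)ℤ`. -/
theorem stmt_3 (m : ℕ) (hm : 1 ≤ m)
    (Λ : Set (EuclideanSpace ℝ (Fin (2 * m + 1))))
    (hΛ : Λ = {x : EuclideanSpace ℝ (Fin (2 * m + 1)) |
      (∀ i, ∃ k : ℤ, x i = (k : ℝ)) ∨ (∀ i, ∃ k : ℤ, x i = (k : ℝ) + 1/2)})
    (j : Fin (2 * m + 1))
    (S I : Finset (Fin (2 * m + 1)))
    (hSI : Disjoint S I) (hS : S.card = m) (hI : I.card = m)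
    (hU : S ∪ I = Finset.univ \ {j})
    (u : EuclideanSpace ℝ (Fin (2 * m + 1)))
    (huS : ∀ i ∈ S, ∃ k : ℤ, u i = (k : ℝ) + 1/2)
    (huI : ∀ i ∈ I, ∃ k : ℤ, u i = (k : ℝ))
    (huj : ∃ k : ℤ, u j = 1/4 + (k : ℝ) / 2) :
    ∀ x ∈ Λ, (4 * m + 1 : ℝ) / 16 ≤ ‖x - u‖ ^ 2 ∧
      Real.sqrt (4 * m + 1) / 4 ≤ dist x u := by
  intro x hx
  rw [hΛ] at hx
  obtain ⟨kj, hkj⟩ := huj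
  have hnorm : ‖x - u‖ ^ 2 = ∑ i, (x i - u i) ^ 2 := by
    rw [EuclideanSpace.norm_eq, Real.sq_sqrt (by positivity)]
    congr 1; ext i
    simp [sq_abs, Real.norm_eq_abs]
  have hsplit : (Finset.univ : Finset (Fin (2 * m + 1))) = insert j (S ∪ I) := by
    rw [hU]; ext i
    by_cases h : i = j <;> simp [h]
  have hjnot : j ∉ S ∪ I := by rw [hU]; simp
  have key : (4 * m + 1 : ℝ) / 16 ≤ ∑ i, (x i - u i) ^ 2 := by
    rw [hsplit, Finset.sum_insert hjnot, Finset.sum_union hSI]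
    rcases hx with hx | hx
    · -- x has integer coordinates
      obtain ⟨n, hn⟩ := hx j
      have hj : (1/16 : ℝ) ≤ (x j - u j) ^ 2 := by
        have := quarter_sq (2 * n - kj - 1)
        have e : x j - u j = ((2 * n - kj - 1 : ℤ) : ℝ) / 2 + 1/4 := by
          rw [hn, hkj]; push_cast; ring
        rw [e]; exact this
      have hSsum : (m : ℝ) / 4 ≤ ∑ i ∈ S, (x i - u i) ^ 2 := by
        have hle : ∀ i ∈ S, (1/4 : ℝ) ≤ (x i - u i) ^ 2 := by
          intro i hi
          obtain ⟨n, hn⟩ := hx i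
          obtain ⟨k, hk⟩ := huS i hi
          have e : x i - u i = ((n - k - 1 : ℤ) : ℝ) + 1/2 := by
            rw [hn, hk]; push_cast; ring
          rw [e]; exact half_sq_s3 _
        calc (m : ℝ) / 4 = S.card • (1/4 : ℝ) := by
              rw [hS, nsmul_eq_mul]; ring
          _ ≤ _ := Finset.card_nsmul_le_sum S _ _ hle
      have hIsum : (0 : ℝ) ≤ ∑ i ∈ I, (x i - u i) ^ 2 :=
        Finset.sum_nonneg fun i _ => sq_nonneg _
      linarith
    · -- x has half-integer coordinates
      obtain ⟨n, hn⟩ := hx j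
      have hj : (1/16 : ℝ) ≤ (x j - u j) ^ 2 := by
        have := quarter_sq (2 * n - kj)
        have e : x j - u j = ((2 * n - kj : ℤ) : ℝ) / 2 + 1/4 := by
          rw [hn, hkj]; push_cast; ring
        rw [e]; exact this
      have hIsum : (m : ℝ) / 4 ≤ ∑ i ∈ I, (x i - u i) ^ 2 := by
        have hle : ∀ i ∈ I, (1/4 : ℝ) ≤ (x i - u i) ^ 2 := by
          intro i hi
          obtain ⟨n, hn⟩ := hx i
          obtain ⟨k, hk⟩ := huI i hi
          have e : x i - u i = ((n - k : ℤ) : ℝ) + 1/2 := by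
            rw [hn, hk]; push_cast; ring
          rw [e]; exact half_sq_s3 _
        calc (m : ℝ) / 4 = I.card • (1/4 : ℝ) := by
              rw [hI, nsmul_eq_mul]; ring
          _ ≤ _ := Finset.card_nsmul_le_sum I _ _ hle
      have hSsum : (0 : ℝ) ≤ ∑ i ∈ S, (x i - u i) ^ 2 :=
        Finset.sum_nonneg fun i _ => sq_nonneg _
      linarith
  have h1 : (4 * m + 1 : ℝ) / 16 ≤ ‖x - u‖ ^ 2 := by rw [hnorm]; exact key
  refine ⟨h1, ?_⟩
  rw [dist_eq_norm]
  have h2 := Real.sqrt_le_sqrt h1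
  rwa [Real.sqrt_sq (norm_nonneg _),
    show (4 * (m : ℝ) + 1) / 16 = (4 * m + 1) / 4 ^ 2 by norm_num,
    Real.sqrt_div' , Real.sqrt_sq] at h2 <;> norm_num
end

section
/- The set of points x ∈ Λ_{2m+1} with ‖x − u‖ ≤ √(4m+1) / 4 equals C_int ∪ C_half; moreover every point of C_int ∪ C_half is at distance exactly √(4m+1) / 4 from u, and C_int ∪ C_half has exactly 2^(m+1) elements. -/
/-!
Put `y = x - u`. On the `m` coordinates where `x` and `u` lie in different cosets of `ℤ`
(`S` when `x` is integral, `I` when `x` is half-integral) we have `|yᵢ| ≥ 1/2`, and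
`y_j ∈ 1/4 + ½ℤ` gives `|y_j| ≥ 1/4`. Hence `‖y‖² ≥ m/4 + 1/16 = (4m+1)/16`, with equality
exactly when `y` vanishes on the remaining `m` coordinates and every bound is attained. The
equality cases form the vertex set of an `m`-cube: of the two candidates `u_j ± 1/4` for `x_j`
exactly one is an integer and the other a half-integer, so `x_j` is forced by the coset of `x`.
-/

open Finset

lemma Set.ncard_univ_pi {α : Type*} [Fintype α] {β : α → Type*} (s : ∀ i, Set (β i)) :
    (Set.univ.pi s).ncard = ∏ i, (s i).ncard := by
  simp [Set.ncard]

lemma ncard_setOf_abs_sub_eq (c : ℝ) {r : ℝ} (hr : 0 < r) : {a : ℝ | |a - c| = r}.ncard = 2 := by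
  have : {a : ℝ | |a - c| = r} = {c - r, c + r} := by
    ext a
    simp only [Set.mem_ofPred_eq, Set.mem_insert_iff, Set.mem_singleton_iff, abs_eq hr.le]
    constructor <;> rintro (h | h) <;> [right; left; right; left] <;> linarith
  rw [this, Set.ncard_pair (by linarith)]

lemma one_le_abs_two_mul_intCast_sub_one (n : ℤ) : 1 ≤ |2 * (n : ℝ) - 1| := by
  exact_mod_cast Int.one_le_abs (by omega : 2 * n - 1 ≠ 0)

lemma half_le_abs_int_sub_half_int {a b : ℝ} (ha : ∃ k : ℤ, a = k)
    (hb : ∃ k : ℤ, b = k + 1/2) : 1/2 ≤ |a - b| := by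
  obtain ⟨k, rfl⟩ := ha
  obtain ⟨l, rfl⟩ := hb
  rw [show (k : ℝ) - (l + 1/2) = (2 * ((k - l : ℤ) : ℝ) - 1) / 2 by push_cast; ring, abs_div,
    abs_two]
  linarith [one_le_abs_two_mul_intCast_sub_one (k - l)]

lemma quarter_le_abs_sub_of_two_mul_int {a v : ℝ} (ha : ∃ k : ℤ, 2 * a = k)
    (hv : ∃ k : ℤ, v = 1/4 + k/2) : 1/4 ≤ |a - v| := by
  obtain ⟨k, hk⟩ := ha
  obtain ⟨l, rfl⟩ := hv
  rw [show a - (1/4 + l/2) = (2 * ((k - l : ℤ) : ℝ) - 1) / 4 by push_cast; linarith, abs_div,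
    abs_of_pos (by norm_num : (0 : ℝ) < 4)]
  linarith [one_le_abs_two_mul_intCast_sub_one (k - l)]

lemma eq_of_abs_sub_eq_quarter {a b v : ℝ} (hab : ∃ n : ℤ, a - b = n) (ha : |a - v| = 1/4)
    (hb : |b - v| = 1/4) : a = b := by
  obtain ⟨n, hn⟩ := hab
  have hle : |(n : ℝ)| ≤ 1/2 := by
    rw [← hn]
    linarith [abs_sub_le a v b, abs_sub_comm v b]
  have hn0 : n = 0 := Int.abs_lt_one_iff.1 (by exact_mod_cast (by linarith : |(n : ℝ)| < 1))
  rw [hn0, Int.cast_zero, sub_eq_zero] at hn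
  exact hn

lemma exists_int_abs_sub_eq_quarter {v : ℝ} (hv : ∃ k : ℤ, v = 1/4 + k/2) :
    (∃ n : ℤ, |n - v| = 1/4) ∧ ∃ n : ℤ, |n + 1/2 - v| = 1/4 := by
  obtain ⟨k, rfl⟩ := hv
  obtain ⟨q, rfl | rfl⟩ := Int.even_or_odd' k
  · refine ⟨⟨q, ?_⟩, ⟨q, ?_⟩⟩ <;> push_cast <;> ring_nf <;> norm_num [abs_of_pos]
  · refine ⟨⟨q + 1, ?_⟩, ⟨q, ?_⟩⟩ <;> push_cast <;> ring_nf <;> norm_num [abs_of_pos]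

lemma ncard_setOf_int_add_abs_sub_eq_quarter {δ v : ℝ} (h : ∃ n : ℤ, |n + δ - v| = 1/4) :
    {a : ℝ | (∃ n : ℤ, a = n + δ) ∧ |a - v| = 1/4}.ncard = 1 := by
  obtain ⟨n, hn⟩ := h
  refine Set.ncard_eq_one.2 ⟨n + δ, Set.ext fun a => ⟨?_, ?_⟩⟩
  · rintro ⟨⟨k, rfl⟩, ha⟩
    exact eq_of_abs_sub_eq_quarter ⟨k - n, by push_cast; ring⟩ ha hn
  · rintro rfl
    exact ⟨⟨n, rfl⟩, hn⟩

lemma int_of_abs_sub_eq_half {a b : ℝ} (hb : ∃ k : ℤ, b = k + 1/2) (h : |a - b| = 1/2) :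
    ∃ k : ℤ, a = k := by
  obtain ⟨k, rfl⟩ := hb
  rcases (abs_eq (by norm_num)).1 h with h | h
  exacts [⟨k + 1, by push_cast; linarith⟩, ⟨k, by linarith⟩]

lemma half_int_of_abs_sub_eq_half {a b : ℝ} (hb : ∃ k : ℤ, b = k) (h : |a - b| = 1/2) :
    ∃ k : ℤ, a = k + 1/2 := by
  obtain ⟨k, rfl⟩ := hb
  rcases (abs_eq (by norm_num)).1 h with h | h
  exacts [⟨k, by linarith⟩, ⟨k - 1, by push_cast; linarith⟩]

lemma intCast_ne_intCast_add_half (n k : ℤ) : (n : ℝ) ≠ k + 1/2 := by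
  intro h
  have : ((2 * n : ℤ) : ℝ) = ((2 * k + 1 : ℤ) : ℝ) := by push_cast; linarith
  have := Int.cast_injective this
  omega

lemma EuclideanSpace.norm_sub_sq_eq_sum {ι : Type*} [Fintype ι] (x u : EuclideanSpace ℝ ι) :
    ‖x - u‖ ^ 2 = ∑ i, (x i - u i) ^ 2 := by
  simp [EuclideanSpace.real_norm_sq_eq]

lemma sqrt_four_mul_add_one_div_four_sq (n : ℕ) : (√(4 * n + 1) / 4) ^ 2 = (4 * n + 1) / 16 := by
  rw [div_pow, Real.sq_sqrt (by positivity)]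
  norm_num

section Partition

variable {ι : Type*} [Fintype ι] [DecidableEq ι] {j : ι} {A B : Finset ι}

lemma mem_union_iff_ne (hU : A ∪ B = univ \ {j}) {i : ι} : i ∈ A ∪ B ↔ i ≠ j := by
  simp [hU]

@[to_additive]
lemma prod_univ_eq_prod_mul_prod_mul {M : Type*} [CommMonoid M] (hAB : Disjoint A B)
    (hU : A ∪ B = univ \ {j}) (f : ι → M) :
    ∏ i, f i = (∏ i ∈ A, f i) * (∏ i ∈ B, f i) * f j := by
  rw [prod_eq_prod_sdiff_singleton_mul (mem_univ j), ← hU, prod_union hAB]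

lemma forall_of_partition (hU : A ∪ B = univ \ {j}) {P : ι → Prop} (hA : ∀ i ∈ A, P i)
    (hB : ∀ i ∈ B, P i) (hj : P j) : ∀ i, P i := by
  intro i
  by_cases hij : i = j
  · exact hij ▸ hj
  · rcases mem_union.1 ((mem_union_iff_ne hU).2 hij) with hi | hi
    exacts [hA i hi, hB i hi]

lemma ncard_setOf_partition (hAB : Disjoint A B) (hU : A ∪ B = univ \ {j})
    (P Q : ι → ℝ → Prop) (R : ℝ → Prop) :
    {x : EuclideanSpace ℝ ι | (∀ i ∈ B, P i (x i)) ∧ (∀ i ∈ A, Q i (x i)) ∧ R (x j)}.ncard =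
      (∏ i ∈ A, {a | Q i a}.ncard) * (∏ i ∈ B, {a | P i a}.ncard) * {a | R a}.ncard := by
  have hjA : j ∉ A := fun h => (mem_union_iff_ne hU).1 (mem_union_left B h) rfl
  have hjB : j ∉ B := fun h => (mem_union_iff_ne hU).1 (mem_union_right A h) rfl
  set T : ι → Set ℝ := fun i =>
    if i ∈ A then {a | Q i a} else if i ∈ B then {a | P i a} else {a | R a} with hT
  have hTA : ∀ i ∈ A, T i = {a | Q i a} := fun i hi => if_pos hi
  have hTB : ∀ i ∈ B, T i = {a | P i a} := fun i hi => by
    simp [hT, disjoint_right.1 hAB hi, hi]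
  have hTj : T j = {a | R a} := by simp [hT, hjA, hjB]
  have hset : {x : EuclideanSpace ℝ ι | (∀ i ∈ B, P i (x i)) ∧ (∀ i ∈ A, Q i (x i)) ∧ R (x j)}
      = WithLp.ofLp ⁻¹' Set.univ.pi T := by
    ext x
    simp only [Set.mem_ofPred_eq, Set.mem_preimage, Set.mem_univ_pi]
    constructor
    · rintro ⟨hB, hA, hj⟩
      refine forall_of_partition hU (fun i hi => ?_) (fun i hi => ?_) ?_
      · rw [hTA i hi]; exact hA i hi
      · rw [hTB i hi]; exact hB i hi
      · rw [hTj]; exact hj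
    · intro h
      refine ⟨fun i hi => ?_, fun i hi => ?_, ?_⟩
      · have := h i; rwa [hTB i hi] at this
      · have := h i; rwa [hTA i hi] at this
      · have := h j; rwa [hTj] at this
  rw [hset, Set.ncard_preimage_of_injective_subset_range (WithLp.ofLp_injective 2)
    (by rw [(WithLp.ofLp_surjective 2).range_eq]; exact Set.subset_univ _), Set.ncard_univ_pi,
    prod_univ_eq_prod_mul_prod_mul hAB hU, prod_congr rfl fun i hi => congrArg _ (hTA i hi),
    prod_congr rfl fun i hi => congrArg _ (hTB i hi), hTj]

lemma ncard_cube_vertices (hAB : Disjoint A B) (hU : A ∪ B = univ \ {j})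
    (u : EuclideanSpace ℝ ι) {R : ℝ → Prop} (hR : {a | R a}.ncard = 1) :
    {x : EuclideanSpace ℝ ι |
      (∀ i ∈ B, x i = u i) ∧ (∀ i ∈ A, |x i - u i| = 1/2) ∧ R (x j)}.ncard = 2 ^ #A := by
  rw [ncard_setOf_partition hAB hU (fun i a => a = u i) (fun i a => |a - u i| = 1/2) R, hR,
    prod_congr rfl fun i _ => ncard_setOf_abs_sub_eq (u i) one_half_pos]
  simp

lemma ncard_cube_vertices_int (hAB : Disjoint A B) (hU : A ∪ B = univ \ {j})
    (u : EuclideanSpace ℝ ι) (huj : ∃ k : ℤ, u j = 1/4 + k/2) :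
    {x : EuclideanSpace ℝ ι | (∀ i ∈ B, x i = u i) ∧ (∀ i ∈ A, |x i - u i| = 1/2) ∧
      (∃ k : ℤ, x j = k) ∧ |x j - u j| = 1/4}.ncard = 2 ^ #A := by
  refine ncard_cube_vertices hAB hU u (R := fun a => (∃ k : ℤ, a = k) ∧ |a - u j| = 1/4) ?_
  simpa using ncard_setOf_int_add_abs_sub_eq_quarter (δ := 0)
    (by simpa using (exists_int_abs_sub_eq_quarter huj).1)

lemma ncard_cube_vertices_half_int (hAB : Disjoint A B) (hU : A ∪ B = univ \ {j})
    (u : EuclideanSpace ℝ ι) (huj : ∃ k : ℤ, u j = 1/4 + k/2) :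
    {x : EuclideanSpace ℝ ι | (∀ i ∈ B, x i = u i) ∧ (∀ i ∈ A, |x i - u i| = 1/2) ∧
      (∃ k : ℤ, x j = k + 1/2) ∧ |x j - u j| = 1/4}.ncard = 2 ^ #A :=
  ncard_cube_vertices hAB hU u
    (ncard_setOf_int_add_abs_sub_eq_quarter (exists_int_abs_sub_eq_quarter huj).2)

lemma norm_sub_eq_of_cube_vertex (hAB : Disjoint A B) (hU : A ∪ B = univ \ {j})
    {x u : EuclideanSpace ℝ ι} (hB : ∀ i ∈ B, x i = u i) (hA : ∀ i ∈ A, |x i - u i| = 1/2)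
    (hj : |x j - u j| = 1/4) : ‖x - u‖ = √(4 * #A + 1) / 4 := by
  rw [← sq_eq_sq₀ (norm_nonneg _) (by positivity), sqrt_four_mul_add_one_div_four_sq,
    EuclideanSpace.norm_sub_sq_eq_sum, sum_univ_eq_sum_add_sum_add hAB hU,
    sum_congr rfl fun i hi => by rw [← sq_abs, hA i hi],
    sum_eq_zero (s := B) fun i hi => by rw [hB i hi, sub_self, sq, zero_mul], ← sq_abs, hj]
  simp
  ring

lemma cube_vertex_of_norm_sub_le (hAB : Disjoint A B) (hU : A ∪ B = univ \ {j})
    {x u : EuclideanSpace ℝ ι} (hA : ∀ i ∈ A, 1/2 ≤ |x i - u i|) (hj : 1/4 ≤ |x j - u j|)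
    (h : ‖x - u‖ ≤ √(4 * #A + 1) / 4) :
    (∀ i ∈ B, x i = u i) ∧ (∀ i ∈ A, |x i - u i| = 1/2) ∧ |x j - u j| = 1/4 := by
  have hsum := pow_le_pow_left₀ (norm_nonneg _) h 2
  rw [sqrt_four_mul_add_one_div_four_sq, EuclideanSpace.norm_sub_sq_eq_sum,
    sum_univ_eq_sum_add_sum_add hAB hU] at hsum
  have hA' : ∀ i ∈ A, (1/2 : ℝ) ^ 2 ≤ (x i - u i) ^ 2 := fun i hi =>
    sq_le_sq.2 (by rw [abs_of_pos one_half_pos]; exact hA i hi)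
  have hj' : (1/4 : ℝ) ^ 2 ≤ (x j - u j) ^ 2 :=
    sq_le_sq.2 (by rw [abs_of_pos (by norm_num : (0:ℝ) < 1/4)]; exact hj)
  have sA := sum_le_sum hA'
  have sB : 0 ≤ ∑ i ∈ B, (x i - u i) ^ 2 := sum_nonneg fun i _ => sq_nonneg _
  rw [sum_const, nsmul_eq_mul] at sA
  have eA : ∑ i ∈ A, (1/2 : ℝ) ^ 2 = ∑ i ∈ A, (x i - u i) ^ 2 := by
    rw [sum_const, nsmul_eq_mul]; linarith
  have eB : ∑ i ∈ B, (x i - u i) ^ 2 = 0 := by linarith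
  have ej : (x j - u j) ^ 2 = (1/4) ^ 2 := by linarith
  refine ⟨fun i hi => ?_, fun i hi => ?_, ?_⟩
  · have := (sum_eq_zero_iff_of_nonneg fun i _ => sq_nonneg (x i - u i)).1 eB i hi
    rwa [sq_eq_zero_iff, sub_eq_zero] at this
  · have := ((sum_eq_sum_iff_of_le hA').1 eA i hi).symm
    rwa [sq_eq_sq_iff_abs_eq_abs, abs_of_pos (by norm_num : (0:ℝ) < 1/2)] at this
  · rwa [sq_eq_sq_iff_abs_eq_abs, abs_of_pos (by norm_num : (0:ℝ) < 1/4)] at ej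

lemma cube_vertex_of_int (hAB : Disjoint A B) (hU : A ∪ B = univ \ {j})
    {x u : EuclideanSpace ℝ ι} (hx : ∀ i, ∃ k : ℤ, x i = k)
    (huA : ∀ i ∈ A, ∃ k : ℤ, u i = k + 1/2) (huj : ∃ k : ℤ, u j = 1/4 + k/2)
    (h : ‖x - u‖ ≤ √(4 * #A + 1) / 4) :
    (∀ i ∈ B, x i = u i) ∧ (∀ i ∈ A, |x i - u i| = 1/2) ∧ |x j - u j| = 1/4 := by
  refine cube_vertex_of_norm_sub_le hAB hU
    (fun i hi => half_le_abs_int_sub_half_int (hx i) (huA i hi))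
    (quarter_le_abs_sub_of_two_mul_int ?_ huj) h
  obtain ⟨k, hk⟩ := hx j
  exact ⟨2 * k, by rw [hk]; push_cast; ring⟩

lemma cube_vertex_of_half_int (hAB : Disjoint A B) (hU : A ∪ B = univ \ {j})
    {x u : EuclideanSpace ℝ ι} (hx : ∀ i, ∃ k : ℤ, x i = k + 1/2)
    (huA : ∀ i ∈ A, ∃ k : ℤ, u i = k) (huj : ∃ k : ℤ, u j = 1/4 + k/2)
    (h : ‖x - u‖ ≤ √(4 * #A + 1) / 4) :
    (∀ i ∈ B, x i = u i) ∧ (∀ i ∈ A, |x i - u i| = 1/2) ∧ |x j - u j| = 1/4 := by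
  refine cube_vertex_of_norm_sub_le hAB hU
    (fun i hi => abs_sub_comm (u i) (x i) ▸ half_le_abs_int_sub_half_int (huA i hi) (hx i))
    (quarter_le_abs_sub_of_two_mul_int ?_ huj) h
  obtain ⟨k, hk⟩ := hx j
  exact ⟨2 * k + 1, by rw [hk]; push_cast; ring⟩

lemma int_of_cube_vertex (hU : A ∪ B = univ \ {j}) {x u : EuclideanSpace ℝ ι}
    (huA : ∀ i ∈ A, ∃ k : ℤ, u i = k + 1/2) (huB : ∀ i ∈ B, ∃ k : ℤ, u i = k)
    (hB : ∀ i ∈ B, x i = u i) (hA : ∀ i ∈ A, |x i - u i| = 1/2) (hj : ∃ k : ℤ, x j = k) :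
    ∀ i, ∃ k : ℤ, x i = k :=
  forall_of_partition hU (fun i hi => int_of_abs_sub_eq_half (huA i hi) (hA i hi))
    (fun i hi => hB i hi ▸ huB i hi) hj

lemma half_int_of_cube_vertex (hU : A ∪ B = univ \ {j}) {x u : EuclideanSpace ℝ ι}
    (huA : ∀ i ∈ A, ∃ k : ℤ, u i = k) (huB : ∀ i ∈ B, ∃ k : ℤ, u i = k + 1/2)
    (hB : ∀ i ∈ B, x i = u i) (hA : ∀ i ∈ A, |x i - u i| = 1/2)
    (hj : ∃ k : ℤ, x j = k + 1/2) : ∀ i, ∃ k : ℤ, x i = k + 1/2 :=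
  forall_of_partition hU (fun i hi => half_int_of_abs_sub_eq_half (huA i hi) (hA i hi))
    (fun i hi => hB i hi ▸ huB i hi) hj

end Partition

theorem stmt_4_general (m : ℕ)
    (Λ : Set (EuclideanSpace ℝ (Fin (2 * m + 1))))
    (hΛ : Λ = {x : EuclideanSpace ℝ (Fin (2 * m + 1)) |
      (∀ i, ∃ k : ℤ, x i = (k : ℝ)) ∨ (∀ i, ∃ k : ℤ, x i = (k : ℝ) + 1/2)})
    (j : Fin (2 * m + 1))
    (S I : Finset (Fin (2 * m + 1)))
    (hSI : Disjoint S I) (hS : S.card = m) (hI : I.card = m)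
    (hU : S ∪ I = Finset.univ \ {j})
    (u : EuclideanSpace ℝ (Fin (2 * m + 1)))
    (huS : ∀ i ∈ S, ∃ k : ℤ, u i = (k : ℝ) + 1/2)
    (huI : ∀ i ∈ I, ∃ k : ℤ, u i = (k : ℝ))
    (huj : ∃ k : ℤ, u j = 1/4 + (k : ℝ) / 2)
    (Chalf Cint : Set (EuclideanSpace ℝ (Fin (2 * m + 1))))
    (hChalf : Chalf = {x : EuclideanSpace ℝ (Fin (2 * m + 1)) |
      (∀ i ∈ S, x i = u i) ∧ (∀ i ∈ I, |x i - u i| = 1/2) ∧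
      (∃ k : ℤ, x j = (k : ℝ) + 1/2) ∧ |x j - u j| = 1/4})
    (hCint : Cint = {x : EuclideanSpace ℝ (Fin (2 * m + 1)) |
      (∀ i ∈ I, x i = u i) ∧ (∀ i ∈ S, |x i - u i| = 1/2) ∧
      (∃ k : ℤ, x j = (k : ℝ)) ∧ |x j - u j| = 1/4}) :
    {x ∈ Λ | ‖x - u‖ ≤ Real.sqrt (4 * m + 1) / 4} = Cint ∪ Chalf ∧
    (∀ x ∈ Cint ∪ Chalf, dist x u = Real.sqrt (4 * m + 1) / 4) ∧
    (Cint ∪ Chalf).ncard = 2 ^ (m + 1) := by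
  subst hΛ
  have hIS : Disjoint I S := hSI.symm
  have hU' : I ∪ S = univ \ {j} := by rw [union_comm, hU]
  have hnorm : ∀ x ∈ Cint ∪ Chalf, ‖x - u‖ = √(4 * m + 1) / 4 := by
    rw [hCint, hChalf]
    rintro x (⟨hI', hS', -, hj⟩ | ⟨hS', hI', -, hj⟩)
    · rw [norm_sub_eq_of_cube_vertex hSI hU hI' hS' hj, hS]
    · rw [norm_sub_eq_of_cube_vertex hIS hU' hS' hI' hj, hI]
  refine ⟨Set.ext fun x => ⟨?_, fun hx => ⟨?_, (hnorm x hx).le⟩⟩,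
    fun x hx => (dist_eq_norm x u).trans (hnorm x hx), ?_⟩
  · rintro ⟨hx | hx, hle⟩
    · obtain ⟨hI', hS', hj⟩ := cube_vertex_of_int hSI hU hx huS huj (by rwa [hS])
      exact Or.inl (hCint ▸ ⟨hI', hS', hx j, hj⟩)
    · obtain ⟨hS', hI', hj⟩ := cube_vertex_of_half_int hIS hU' hx huI huj (by rwa [hI])
      exact Or.inr (hChalf ▸ ⟨hS', hI', hx j, hj⟩)
  · rw [hCint, hChalf] at hx
    rcases hx with ⟨hI', hS', hj, -⟩ | ⟨hS', hI', hj, -⟩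
    · exact Or.inl (int_of_cube_vertex hU huS huI hI' hS' hj)
    · exact Or.inr (half_int_of_cube_vertex hU' huI huS hS' hI' hj)
  have hcardInt : Cint.ncard = 2 ^ m := by rw [hCint, ncard_cube_vertices_int hSI hU u huj, hS]
  have hcardHalf : Chalf.ncard = 2 ^ m := by
    rw [hChalf, ncard_cube_vertices_half_int hIS hU' u huj, hI]
  have hdisj : Disjoint Cint Chalf := by
    rw [hCint, hChalf, Set.disjoint_left]
    rintro x ⟨-, -, ⟨n, hn⟩, -⟩ ⟨-, -, ⟨n', hn'⟩, -⟩
    exact intCast_ne_intCast_add_half n n' (hn ▸ hn')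
  rw [Set.ncard_union_eq hdisj (Set.finite_of_ncard_pos (by rw [hcardInt]; positivity))
    (Set.finite_of_ncard_pos (by rw [hcardHalf]; positivity)), hcardInt, hcardHalf,
    pow_succ, mul_two]

/-- The points of the lattice `D_{2m+1}^*` at distance at most `√(4m+1) / 4` from `u` are
exactly the `2^(m+1)` points `C_int ∪ C_half` (the vertices of the join of two `m`-cubes),
all of which lie at distance exactly `√(4m+1) / 4` from `u`. -/
theorem stmt_4 (m : ℕ) (hm : 1 ≤ m)
    (Λ : Set (EuclideanSpace ℝ (Fin (2 * m + 1))))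
    (hΛ : Λ = {x : EuclideanSpace ℝ (Fin (2 * m + 1)) |
      (∀ i, ∃ k : ℤ, x i = (k : ℝ)) ∨ (∀ i, ∃ k : ℤ, x i = (k : ℝ) + 1/2)})
    (j : Fin (2 * m + 1))
    (S I : Finset (Fin (2 * m + 1)))
    (hSI : Disjoint S I) (hS : S.card = m) (hI : I.card = m)
    (hU : S ∪ I = Finset.univ \ {j})
    (u : EuclideanSpace ℝ (Fin (2 * m + 1)))
    (huS : ∀ i ∈ S, ∃ k : ℤ, u i = (k : ℝ) + 1/2)
    (huI : ∀ i ∈ I, ∃ k : ℤ, u i = (k : ℝ))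
    (huj : ∃ k : ℤ, u j = 1/4 + (k : ℝ) / 2)
    (Chalf Cint : Set (EuclideanSpace ℝ (Fin (2 * m + 1))))
    (hChalf : Chalf = {x : EuclideanSpace ℝ (Fin (2 * m + 1)) |
      (∀ i ∈ S, x i = u i) ∧ (∀ i ∈ I, |x i - u i| = 1/2) ∧
      (∃ k : ℤ, x j = (k : ℝ) + 1/2) ∧ |x j - u j| = 1/4})
    (hCint : Cint = {x : EuclideanSpace ℝ (Fin (2 * m + 1)) |
      (∀ i ∈ I, x i = u i) ∧ (∀ i ∈ S, |x i - u i| = 1/2) ∧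
      (∃ k : ℤ, x j = (k : ℝ)) ∧ |x j - u j| = 1/4}) :
    {x ∈ Λ | ‖x - u‖ ≤ Real.sqrt (4 * m + 1) / 4} = Cint ∪ Chalf ∧
    (∀ x ∈ Cint ∪ Chalf, dist x u = Real.sqrt (4 * m + 1) / 4) ∧
    (Cint ∪ Chalf).ncard = 2 ^ (m + 1) :=
  stmt_4_general m Λ hΛ j S I hSI hS hI hU u huS huI huj Chalf Cint hChalf hCint
end

section
/- The intersection of the convex hulls of the two m-dimensional cubes constituting the Delone polytope of D_{2m}^* centered at u is the single point u; that is, (convexHull ℝ B_int) ∩ (convexHull ℝ B_half) = {u}. -/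
/-!
Each cube is the set of `±1/2`-perturbations of `u` on one block of coordinates, so its
convex hull lies in the affine subspace fixing the complementary block, and it contains `u`
as the midpoint of `u - w` and `u + w` for `w` the half-indicator of its own block. The two
affine subspaces fix complementary blocks, so they meet only in `u`.
-/

namespace EuclideanSpace

variable {ι : Type*}

def coordCubeVertices (u : EuclideanSpace ℝ ι) (T : Set ι) (r : ℝ) :
    Set (EuclideanSpace ℝ ι) :=
  {x | (∀ i ∉ T, x i = u i) ∧ ∀ i ∈ T, |x i - u i| = r}

theorem convex_setOf_forall_notMem_apply_eq (u : EuclideanSpace ℝ ι) (T : Set ι) :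
    Convex ℝ {x : EuclideanSpace ℝ ι | ∀ i ∉ T, x i = u i} := by
  simp only [Set.ofPred_forall]
  exact convex_iInter₂ fun i _ =>
    convex_hyperplane (EuclideanSpace.proj (𝕜 := ℝ) i).isLinear (u i)

theorem convexHull_coordCubeVertices_subset (u : EuclideanSpace ℝ ι) (T : Set ι) (r : ℝ) :
    convexHull ℝ (coordCubeVertices u T r) ⊆ {x | ∀ i ∉ T, x i = u i} :=
  convexHull_min (fun _ hx => hx.1) (convex_setOf_forall_notMem_apply_eq u T)

theorem center_mem_convexHull_coordCubeVertices (u : EuclideanSpace ℝ ι) (T : Set ι) {r : ℝ}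
    (hr : 0 ≤ r) : u ∈ convexHull ℝ (coordCubeVertices u T r) := by
  set w : EuclideanSpace ℝ ι := WithLp.toLp 2 (T.indicator fun _ => r)
  have hmem : ∀ s : ℝ, |s| = 1 → u + s • w ∈ coordCubeVertices u T r := by
    refine fun s hs => ⟨fun i hi => ?_, fun i hi => ?_⟩ <;>
      simp [w, hi, abs_mul, hs, abs_of_nonneg hr]
  have hsub := hmem (-1) (by simp)
  have hadd := hmem 1 (by simp)
  rw [neg_one_smul, ← sub_eq_add_neg] at hsub
  rw [one_smul] at hadd
  simpa only [midpoint_sub_add] using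
    segment_subset_convexHull hsub hadd (midpoint_mem_segment (𝕜 := ℝ) _ _)

theorem convexHull_coordCubeVertices_inter_compl {r : ℝ} (hr : 0 ≤ r)
    (u : EuclideanSpace ℝ ι) (T : Set ι) :
    convexHull ℝ (coordCubeVertices u T r) ∩ convexHull ℝ (coordCubeVertices u Tᶜ r) =
      {u} := by
  refine Set.Subset.antisymm (fun x ⟨hxT, hxTc⟩ => ?_) ?_
  · have hfixT := convexHull_coordCubeVertices_subset u T r hxT
    have hfixTc := convexHull_coordCubeVertices_subset u Tᶜ r hxTc
    ext i
    by_cases hi : i ∈ T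
    · exact hfixTc i (not_not.mpr hi)
    · exact hfixT i hi
  · rw [Set.singleton_subset_iff]
    exact ⟨center_mem_convexHull_coordCubeVertices u T hr,
      center_mem_convexHull_coordCubeVertices u Tᶜ hr⟩

end EuclideanSpace

theorem stmt_5_general (m : ℕ)
    (S : Finset (Fin (2 * m)))
    (u : EuclideanSpace ℝ (Fin (2 * m)))
    (Bhalf Bint : Set (EuclideanSpace ℝ (Fin (2 * m))))
    (hBhalf : Bhalf = {x : EuclideanSpace ℝ (Fin (2 * m)) |
      (∀ i ∈ S, x i = u i) ∧ (∀ i ∉ S, |x i - u i| = 1/2)})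
    (hBint : Bint = {x : EuclideanSpace ℝ (Fin (2 * m)) |
      (∀ i ∉ S, x i = u i) ∧ (∀ i ∈ S, |x i - u i| = 1/2)}) :
    (convexHull ℝ Bint) ∩ (convexHull ℝ Bhalf) = {u} := by
  have hBint' : Bint = EuclideanSpace.coordCubeVertices u S (1/2) := hBint
  have hBhalf' : Bhalf = EuclideanSpace.coordCubeVertices u (S : Set (Fin (2 * m)))ᶜ (1/2) := by
    simp [hBhalf, EuclideanSpace.coordCubeVertices]
  rw [hBint', hBhalf']
  exact EuclideanSpace.convexHull_coordCubeVertices_inter_compl (by norm_num) u _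

/-- The two `m`-dimensional cubes constituting the Delone polytope of `D_{2m}^*` centered
at `u` intersect in the single point `u`:
`(convexHull ℝ B_int) ∩ (convexHull ℝ B_half) = {u}`. -/
theorem stmt_5 (m : ℕ) (hm : 1 ≤ m)
    (S : Finset (Fin (2 * m))) (hS : S.card = m)
    (u : EuclideanSpace ℝ (Fin (2 * m)))
    (huS : ∀ i ∈ S, ∃ k : ℤ, u i = (k : ℝ) + 1/2)
    (huI : ∀ i ∉ S, ∃ k : ℤ, u i = (k : ℝ))
    (Bhalf Bint : Set (EuclideanSpace ℝ (Fin (2 * m))))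
    (hBhalf : Bhalf = {x : EuclideanSpace ℝ (Fin (2 * m)) |
      (∀ i ∈ S, x i = u i) ∧ (∀ i ∉ S, |x i - u i| = 1/2)})
    (hBint : Bint = {x : EuclideanSpace ℝ (Fin (2 * m)) |
      (∀ i ∉ S, x i = u i) ∧ (∀ i ∈ S, |x i - u i| = 1/2)}) :
    (convexHull ℝ Bint) ∩ (convexHull ℝ Bhalf) = {u} :=
  stmt_5_general m S u Bhalf Bint hBhalf hBint
end

section
/- Each of the two m-dimensional cubes constituting the Delone polytope of D_{2m+1}^* centered at u is a face of that polytope: both convexHull ℝ C_int and convexHull ℝ C_half are extreme subsets of convexHull ℝ (C_int ∪ C_half), i.e. IsExtreme ℝ (convexHull ℝ (C_int ∪ C_half)) (convexHull ℝ C_int) and IsExtreme ℝ (convexHull ℝ (C_int ∪ C_half)) (convexHull ℝ C_half) hold (this expresses that the Delone polytope is the join of the two cubes). -/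
/-!
The `j`-th coordinate is constant on each cube: on `C_int` it is the integer `round (u j)`, on
`C_half` it is the half-integer `round (u j - 1/2) + 1/2`. So the two cubes lie in distinct
parallel hyperplanes, and the hull of either one is the face of the joint hull cut out by a
supporting hyperplane.
-/

open Set

section Faces

variable {𝕜 E : Type*} [Field 𝕜] [LinearOrder 𝕜] [IsStrictOrderedRing 𝕜]
  [AddCommGroup E] [Module 𝕜 E] {A B C : Set E} {f : E →ₗ[𝕜] 𝕜} {a b : 𝕜}

theorem isExtreme_sep_eq_of_forall_le (hC : ∀ x ∈ C, a ≤ f x) : IsExtreme 𝕜 C {x ∈ C | f x = a} := by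
  refine ⟨sep_subset _ _, ?_⟩
  rintro x₁ h₁ x₂ h₂ x ⟨-, hx⟩ ⟨p, q, hp, hq, hpq, rfl⟩
  rw [map_add, map_smul, map_smul, smul_eq_mul, smul_eq_mul] at hx
  have hsum : p * (f x₁ - a) + q * (f x₂ - a) = 0 := by linear_combination hx - a * hpq
  have h₁a := (add_eq_zero_iff_of_nonneg (mul_nonneg hp.le (sub_nonneg.2 (hC x₁ h₁)))
    (mul_nonneg hq.le (sub_nonneg.2 (hC x₂ h₂)))).1 hsum |>.1
  exact ⟨h₁, by simpa [hp.ne', sub_eq_zero] using h₁a⟩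

theorem convexHull_eq_sep_of_lt (hA : ∀ x ∈ A, f x = a) (hB : ∀ x ∈ B, a < f x) :
    convexHull 𝕜 A = {x ∈ convexHull 𝕜 (A ∪ B) | f x = a} := by
  have hullA : ∀ x ∈ convexHull 𝕜 A, f x = a :=
    convexHull_min hA ((convex_singleton a).linear_preimage f)
  have hullB : ∀ x ∈ convexHull 𝕜 B, a < f x :=
    convexHull_min hB ((convex_Ioi a).linear_preimage f)
  ext x
  refine ⟨fun hx => ⟨convexHull_mono subset_union_left hx, hullA x hx⟩, ?_⟩
  rintro ⟨hx, hfx⟩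
  rcases B.eq_empty_or_nonempty with rfl | hBne
  · simpa using hx
  rcases A.eq_empty_or_nonempty with rfl | hAne
  · rw [empty_union] at hx
    exact absurd hfx (hullB x hx).ne'
  rw [convexHull_union hAne hBne, mem_convexJoin] at hx
  obtain ⟨y, hy, z, hz, p, q, hp, hq, hpq, rfl⟩ := hx
  rw [map_add, map_smul, map_smul, smul_eq_mul, smul_eq_mul, hullA y hy] at hfx
  have hq0 : q = 0 := by
    have : q * (f z - a) = 0 := by linear_combination hfx - a * hpq
    exact (mul_eq_zero.mp this).resolve_right (sub_ne_zero.mpr (hullB z hz).ne')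
  rwa [hq0, zero_smul, add_zero, show p = 1 by linarith, one_smul]

theorem isExtreme_convexHull_union_of_lt (hA : ∀ x ∈ A, f x = a) (hB : ∀ x ∈ B, a < f x) :
    IsExtreme 𝕜 (convexHull 𝕜 (A ∪ B)) (convexHull 𝕜 A) := by
  have hge : ∀ x ∈ convexHull 𝕜 (A ∪ B), a ≤ f x :=
    convexHull_min (union_subset (fun x hx => (hA x hx).ge) fun x hx => (hB x hx).le)
      ((convex_Ici a).linear_preimage f)
  rw [convexHull_eq_sep_of_lt hA hB]
  exact isExtreme_sep_eq_of_forall_le hge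

theorem isExtreme_convexHull_union_of_ne (hA : ∀ x ∈ A, f x = a) (hB : ∀ x ∈ B, f x = b)
    (hab : a ≠ b) : IsExtreme 𝕜 (convexHull 𝕜 (A ∪ B)) (convexHull 𝕜 A) := by
  rcases hab.lt_or_gt with h | h
  · exact isExtreme_convexHull_union_of_lt hA fun x hx => hB x hx ▸ h
  · exact isExtreme_convexHull_union_of_lt (f := -f) (a := -a) (fun x hx => by simp [hA x hx])
      fun x hx => by simp [hB x hx, h]

end Faces

theorem round_eq_of_abs_sub_lt_half {α : Type*} [Field α] [LinearOrder α] [IsStrictOrderedRing α]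
    [FloorRing α] {x : α} {n : ℤ} (h : |(n : α) - x| < 1 / 2) : round x = n := by
  rw [round_eq_iff]
  constructor <;> linarith [(abs_lt.mp h).1, (abs_lt.mp h).2]

theorem stmt_6_general (m : ℕ)
    (j : Fin (2 * m + 1))
    (S I : Finset (Fin (2 * m + 1)))
    (u : EuclideanSpace ℝ (Fin (2 * m + 1)))
    (Chalf Cint : Set (EuclideanSpace ℝ (Fin (2 * m + 1))))
    (hChalf : Chalf = {x : EuclideanSpace ℝ (Fin (2 * m + 1)) |
      (∀ i ∈ S, x i = u i) ∧ (∀ i ∈ I, |x i - u i| = 1/2) ∧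
      (∃ k : ℤ, x j = (k : ℝ) + 1/2) ∧ |x j - u j| = 1/4})
    (hCint : Cint = {x : EuclideanSpace ℝ (Fin (2 * m + 1)) |
      (∀ i ∈ I, x i = u i) ∧ (∀ i ∈ S, |x i - u i| = 1/2) ∧
      (∃ k : ℤ, x j = (k : ℝ)) ∧ |x j - u j| = 1/4}) :
    IsExtreme ℝ (convexHull ℝ (Cint ∪ Chalf)) (convexHull ℝ Cint) ∧
    IsExtreme ℝ (convexHull ℝ (Cint ∪ Chalf)) (convexHull ℝ Chalf) := by
  set f := EuclideanSpace.projₗ (𝕜 := ℝ) j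
  have hint : ∀ x ∈ Cint, f x = round (u j) := by
    rw [hCint]
    rintro x ⟨-, -, ⟨k, hk⟩, hd⟩
    rw [hk] at hd
    rw [show f x = x j from rfl, hk, round_eq_of_abs_sub_lt_half (by rw [hd]; norm_num)]
  have hhalf : ∀ x ∈ Chalf, f x = round (u j - 1 / 2) + 1 / 2 := by
    rw [hChalf]
    rintro x ⟨-, -, ⟨k, hk⟩, hd⟩
    rw [hk, show (k : ℝ) + 1 / 2 - u j = k - (u j - 1 / 2) by ring] at hd
    rw [show f x = x j from rfl, hk, round_eq_of_abs_sub_lt_half (by rw [hd]; norm_num)]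
  have hne : (round (u j) : ℝ) ≠ round (u j - 1 / 2) + 1 / 2 := by
    intro h
    have : ((2 * round (u j) : ℤ) : ℝ) = (2 * round (u j - 1 / 2) + 1 : ℤ) := by
      push_cast; linarith
    have := Int.cast_injective this
    omega
  refine ⟨isExtreme_convexHull_union_of_ne hint hhalf hne, ?_⟩
  rw [union_comm]
  exact isExtreme_convexHull_union_of_ne hhalf hint hne.symm

/-- Each of the two `m`-dimensional cubes constituting the Delone polytope of `D_{2m+1}^*`
centered at `u` is a face (extreme subset) of that polytope; this expresses that the
Delone polytope is the join of the two cubes. -/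
theorem stmt_6 (m : ℕ) (hm : 1 ≤ m)
    (j : Fin (2 * m + 1))
    (S I : Finset (Fin (2 * m + 1)))
    (hSI : Disjoint S I) (hS : S.card = m) (hI : I.card = m)
    (hU : S ∪ I = Finset.univ \ {j})
    (u : EuclideanSpace ℝ (Fin (2 * m + 1)))
    (huS : ∀ i ∈ S, ∃ k : ℤ, u i = (k : ℝ) + 1/2)
    (huI : ∀ i ∈ I, ∃ k : ℤ, u i = (k : ℝ))
    (huj : ∃ k : ℤ, u j = 1/4 + (k : ℝ) / 2)
    (Chalf Cint : Set (EuclideanSpace ℝ (Fin (2 * m + 1))))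
    (hChalf : Chalf = {x : EuclideanSpace ℝ (Fin (2 * m + 1)) |
      (∀ i ∈ S, x i = u i) ∧ (∀ i ∈ I, |x i - u i| = 1/2) ∧
      (∃ k : ℤ, x j = (k : ℝ) + 1/2) ∧ |x j - u j| = 1/4})
    (hCint : Cint = {x : EuclideanSpace ℝ (Fin (2 * m + 1)) |
      (∀ i ∈ I, x i = u i) ∧ (∀ i ∈ S, |x i - u i| = 1/2) ∧
      (∃ k : ℤ, x j = (k : ℝ)) ∧ |x j - u j| = 1/4}) :
    IsExtreme ℝ (convexHull ℝ (Cint ∪ Chalf)) (convexHull ℝ Cint) ∧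
    IsExtreme ℝ (convexHull ℝ (Cint ∪ Chalf)) (convexHull ℝ Chalf) :=
  stmt_6_general m j S I u Chalf Cint hChalf hCint
end

section
/- The free sum Q of three equilateral triangles is a 2-neighborly polytope: for any two distinct points p, q among the nine points w(k,j), the segment from p to q is a face of Q, i.e. IsExtreme ℝ Q (segment ℝ p q). -/
/-!
The nine vertices `w k j` are unit vectors whose pairwise inner products are `-1/2` (same
triangle) or `0` (different triangles). For any set of unit vectors with pairwise inner products
in `(-1, 0]`, the functional `⟪p + q, ·⟫` takes the value `1 + ⟪p, q⟫ > 0` at `p` and `q` and a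
value `≤ 0` at every other vertex, so it exposes exactly the segment `[p, q]` of the hull.
-/

open Set

section Faces

variable {E : Type*} [AddCommGroup E] [Module ℝ E]

lemma Convex.union_setOf_lt (f : E →ₗ[ℝ] ℝ) {c : ℝ} {C : Set E} (hC : Convex ℝ C)
    (hCf : ∀ x ∈ C, f x ≤ c) : Convex ℝ ({x | f x < c} ∪ C) := by
  have hle : ∀ x ∈ {x | f x < c} ∪ C, f x ≤ c := by
    rintro x (hx | hx)
    exacts [le_of_lt hx, hCf x hx]
  rw [convex_iff_openSegment_subset]
  intro x hx y hy z hz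
  by_cases hxy : x ∈ C ∧ y ∈ C
  · exact Or.inr (hC.openSegment_subset hxy.1 hxy.2 hz)
  obtain ⟨a, b, ha, hb, hab, rfl⟩ := hz
  left
  have hlt : f x < c ∨ f y < c := by
    rcases hx with hx | hx <;> rcases hy with hy | hy <;> tauto
  calc f (a • x + b • y) = a * f x + b * f y := by simp
    _ < a * c + b * c := by
      rcases hlt with h | h
      · exact add_lt_add_of_lt_of_le (by gcongr) (by gcongr; exact hle y hy)
      · exact add_lt_add_of_le_of_lt (by gcongr; exact hle x hx) (by gcongr)
    _ = c := by rw [← add_mul, hab, one_mul]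

lemma convexHull_inter_setOf_eq_subset (f : E →ₗ[ℝ] ℝ) {c : ℝ} {S : Set E}
    (hS : ∀ s ∈ S, f s ≤ c) :
    convexHull ℝ S ∩ {x | f x = c} ⊆ convexHull ℝ {s ∈ S | f s = c} := by
  rintro x ⟨hx, hfx⟩
  have hS_sub : S ⊆ {x | f x < c} ∪ convexHull ℝ {s ∈ S | f s = c} := fun s hs =>
    (hS s hs).lt_or_eq.imp id fun h => subset_convexHull ℝ _ ⟨hs, h⟩
  have hhull_le : ∀ y ∈ convexHull ℝ {s ∈ S | f s = c}, f y ≤ c := fun y hy =>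
    convexHull_min (t := {x | f x ≤ c}) (fun s hs => le_of_eq hs.2)
      (convex_halfSpace_le f.isLinear c) hy
  rcases convexHull_min hS_sub ((convex_convexHull ℝ _).union_setOf_lt f hhull_le) hx
    with hlt | hmem
  · exact absurd hfx (ne_of_lt hlt)
  · exact hmem

variable [TopologicalSpace E]

lemma isExtreme_convexHull_segment_of_le (l : StrongDual ℝ E) {c : ℝ} {S : Set E} {p q : E}
    (hp : p ∈ S) (hq : q ∈ S) (hlp : l p = c) (hlq : l q = c) (hS : ∀ s ∈ S, l s ≤ c)
    (heq : ∀ s ∈ S, l s = c → s = p ∨ s = q) :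
    IsExtreme ℝ (convexHull ℝ S) (segment ℝ p q) := by
  have hhull_le : ∀ y ∈ convexHull ℝ S, l y ≤ c := fun y hy =>
    convexHull_min (t := {x | l x ≤ c}) hS (convex_halfSpace_le l.isLinear c) hy
  suffices segment ℝ p q = l.toExposed (convexHull ℝ S) by
    rw [this]
    exact ContinuousLinearMap.toExposed.isExposed.isExtreme
  have hpq_sub : segment ℝ p q ⊆ convexHull ℝ S := by
    rw [← convexHull_pair]
    exact convexHull_mono (pair_subset hp hq)
  have hseg : ∀ x ∈ segment ℝ p q, l x = c := by
    rintro _ ⟨a, b, -, -, hab, rfl⟩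
    simp only [map_add, map_smul, smul_eq_mul, hlp, hlq, ← add_mul, hab, one_mul]
  ext x
  refine ⟨fun hx => ⟨hpq_sub hx, fun y hy => hseg x hx ▸ hhull_le y hy⟩, fun ⟨hx, hmax⟩ => ?_⟩
  have hlx : l x = c := le_antisymm (hhull_le x hx) (hlp ▸ hmax p (subset_convexHull ℝ S hp))
  rw [← convexHull_pair]
  refine convexHull_mono ?_ (convexHull_inter_setOf_eq_subset (l : E →ₗ[ℝ] ℝ) hS ⟨hx, hlx⟩)
  rintro s ⟨hs, hls⟩
  exact heq s hs hls

end Faces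

open scoped RealInnerProductSpace

theorem isExtreme_convexHull_segment_of_inner_nonpos {E : Type*} [NormedAddCommGroup E]
    [InnerProductSpace ℝ E] {S : Set E} (hnorm : ∀ s ∈ S, ‖s‖ = 1)
    (hinner : ∀ s ∈ S, ∀ s' ∈ S, s ≠ s' → -1 < ⟪s, s'⟫ ∧ ⟪s, s'⟫ ≤ 0)
    {p q : E} (hp : p ∈ S) (hq : q ∈ S) (hpq : p ≠ q) :
    IsExtreme ℝ (convexHull ℝ S) (segment ℝ p q) := by
  have hself : ∀ s ∈ S, ⟪s, s⟫ = 1 := fun s hs => by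
    rw [real_inner_self_eq_norm_sq, hnorm s hs, one_pow]
  have hl : ∀ s, innerSL ℝ (p + q) s = ⟪p, s⟫ + ⟪q, s⟫ := fun s => by
    rw [innerSL_apply_apply, inner_add_left]
  obtain ⟨hpq_gt, -⟩ := hinner p hp q hq hpq
  have hlp : innerSL ℝ (p + q) p = 1 + ⟪p, q⟫ := by rw [hl, hself p hp, real_inner_comm]
  have hlq : innerSL ℝ (p + q) q = 1 + ⟪p, q⟫ := by rw [hl, hself q hq, add_comm]
  have hother : ∀ s ∈ S, s ≠ p → s ≠ q → innerSL ℝ (p + q) s < 1 + ⟪p, q⟫ := by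
    intro s hs hsp hsq
    rw [hl]
    linarith [(hinner p hp s hs (Ne.symm hsp)).2, (hinner q hq s hs (Ne.symm hsq)).2]
  refine isExtreme_convexHull_segment_of_le (innerSL ℝ (p + q)) hp hq hlp hlq ?_ ?_
  · intro s hs
    obtain rfl | hsp := eq_or_ne s p
    · exact hlp.le
    obtain rfl | hsq := eq_or_ne s q
    · exact hlq.le
    exact (hother s hs hsp hsq).le
  · intro s hs hls
    by_contra! h
    exact (hother s hs h.1 h.2).ne hls

section TriangleFreeSum

variable {t : Fin 3 → ℝ × ℝ} {w : Fin 3 → Fin 3 → EuclideanSpace ℝ (Fin 6)}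

lemma inner_w_eq (hw : ∀ k j i, w k j i =
      if (i : ℕ) = 2 * (k : ℕ) then (t j).1
      else if (i : ℕ) = 2 * (k : ℕ) + 1 then (t j).2 else 0)
    (k j k' j' : Fin 3) :
    ⟪w k j, w k' j'⟫ = if k = k' then (t j).1 * (t j').1 + (t j).2 * (t j').2 else 0 := by
  simp only [PiLp.inner_apply, RCLike.inner_apply, conj_trivial, Fin.sum_univ_six, hw]
  fin_cases k <;> fin_cases k' <;> simp <;> ring

lemma dot_triangle_vertices (ht : t = ![(1, 0), (-1/2, Real.sqrt 3 / 2), (-1/2, -(Real.sqrt 3 / 2))])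
    (j j' : Fin 3) :
    (t j).1 * (t j').1 + (t j).2 * (t j').2 = if j = j' then 1 else -1/2 := by
  have h3 : Real.sqrt 3 * Real.sqrt 3 = 3 := Real.mul_self_sqrt (by norm_num)
  subst ht
  fin_cases j <;> fin_cases j' <;> simp <;> linarith

end TriangleFreeSum

/-- The free sum `Q` of three equilateral triangles (the Delone polytope of `E6*`) is
2-neighborly: any two distinct vertices among the nine points `w k j` are joined by an
edge, i.e. the segment between them is a face of `Q`. -/
theorem stmt_10
    (t : Fin 3 → ℝ × ℝ)
    (ht : t = ![(1, 0), (-1/2, Real.sqrt 3 / 2), (-1/2, -(Real.sqrt 3 / 2))])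
    (w : Fin 3 → Fin 3 → EuclideanSpace ℝ (Fin 6))
    (hw : ∀ k j i, w k j i =
      if (i : ℕ) = 2 * (k : ℕ) then (t j).1
      else if (i : ℕ) = 2 * (k : ℕ) + 1 then (t j).2 else 0)
    (Q : Set (EuclideanSpace ℝ (Fin 6)))
    (hQ : Q = convexHull ℝ {p | ∃ k j, p = w k j}) :
    ∀ p q : EuclideanSpace ℝ (Fin 6),
      (∃ k j, p = w k j) → (∃ k j, q = w k j) → p ≠ q →
      IsExtreme ℝ Q (segment ℝ p q) := by
  intro p q hp hq hpq
  have gram : ∀ k j k' j', ⟪w k j, w k' j'⟫ =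
      if k = k' then (if j = j' then 1 else -1/2) else 0 := fun k j k' j' => by
    rw [inner_w_eq hw, dot_triangle_vertices ht]
  subst hQ
  refine isExtreme_convexHull_segment_of_inner_nonpos ?_ ?_ hp hq hpq
  · rintro _ ⟨k, j, rfl⟩
    have := real_inner_self_eq_norm_sq (w k j)
    rw [gram, if_pos rfl, if_pos rfl] at this
    exact (pow_eq_one_iff_of_nonneg (norm_nonneg _) two_ne_zero).1 this.symm
  · rintro _ ⟨k, j, rfl⟩ _ ⟨k', j', rfl⟩ hne
    rw [gram]
    split_ifs with hk hj
    · exact absurd (hk ▸ hj ▸ rfl) hne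
    all_goals norm_num
end

section
/- Let W be any subset of the nine points {w(k,j) : k, j ∈ Fin 3} and let P = convexHull ℝ W. Then every two-dimensional face of P is a triangle: if F is a closed convex set with IsExtreme ℝ P F and the vector span of F has ℝ-dimension 2, then there exist affinely independent points a, b, c with F = convexHull ℝ {a, b, c}. -/
/-!
Apart from multiples of `t 0 + t 1 + t 2 = 0`, the vertices of the triangle have no linear
relation, so every linear relation among the nine points `w k j` is constant on each triangle
`k`. An affine relation has total weight zero as well, so it has to involve two complete
triangles, i.e. six points: any four (even five) of the points are affinely independent.
A closed face `F` of `P` is compact, hence the convex hull of its extreme points, which are among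
the nine points. Since `F` is two-dimensional there are at least three of them, and by the
independence of any four there are at most three.
-/

open Finset Module

theorem Fintype.sum_dite_mem {ι M : Type*} [Fintype ι] [AddCommMonoid M] [DecidableEq ι]
    (s : Finset ι) (f : s → M) :
    ∑ x, (if h : x ∈ s then f ⟨x, h⟩ else 0) = ∑ x : s, f x := by
  rw [← Finset.sum_subset (subset_univ s) (fun x _ hx => dif_neg hx),
    sum_dite_of_true (fun _ h => h)]

section BlockConfiguration

variable {K J : Type*}

def IsBlockConstant {α : Type*} (d : K × J → α) : Prop :=
  ∀ k j j', d (k, j) = d (k, j')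

variable [Fintype K] [Fintype J]

theorem IsBlockConstant.eq_zero_of_card_lt {d : K × J → ℝ} (hd : IsBlockConstant d)
    {s : Finset (K × J)} (hsupp : ∀ x ∉ s, d x = 0) (hs : #s < 2 * Fintype.card J)
    (hsum : ∑ x, d x = 0) : d = 0 := by
  classical
  have hfull : ∀ k j, d (k, j) ≠ 0 → ∀ j', (k, j') ∈ s := fun k j hkj j' => by
    by_contra h
    exact hkj ((hd k j j').trans (hsupp _ h))
  funext ⟨k, j⟩
  by_contra hkj
  have hother : ∀ k' ≠ k, ∀ j', d (k', j') = 0 := by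
    intro k' hk' j'
    by_contra hk'j'
    have hsub : ({k, k'} : Finset K) ×ˢ univ ⊆ s := by
      rintro ⟨l, i⟩ hli
      simp only [mem_product, mem_insert, mem_singleton, mem_univ, and_true] at hli
      rcases hli with rfl | rfl
      exacts [hfull _ _ hkj i, hfull _ _ hk'j' i]
    have := card_le_card hsub
    rw [card_product, card_pair hk'.symm, card_univ] at this
    omega
  have hblock : ∑ x, d x = Fintype.card J * d (k, j) := by
    rw [Fintype.sum_prod_type, Fintype.sum_eq_single k fun k' hk' => by simp [hother k' hk']]
    simp [hd k _ j]
  have hJ : (Fintype.card J : ℝ) ≠ 0 := Nat.cast_ne_zero.2 (Fintype.card_pos_iff.2 ⟨j⟩).ne'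
  exact mul_ne_zero hJ hkj (hblock ▸ hsum)

variable {E V : Type*} [AddCommGroup E] [Module ℝ E] [AddCommGroup V] [Module ℝ V]

theorem isBlockConstant_of_sum_smul_eq_zero [DecidableEq K] {v : K × J → E}
    (π : K → E →ₗ[ℝ] V) (t : J → V)
    (hπ : ∀ k k' j, π k (v (k', j)) = if k' = k then t j else 0)
    (ht : ∀ a : J → ℝ, ∑ j, a j • t j = 0 → ∀ j j', a j = a j')
    (c : K × J → ℝ) (hc : ∑ x, c x • v x = 0) : IsBlockConstant c := by
  intro k j j'
  refine ht (fun j => c (k, j)) ?_ j j'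
  have := congrArg (π k) hc
  simpa [Fintype.sum_prod_type, hπ] using this

theorem affineIndependent_of_card_lt {v : K × J → E}
    (hv : ∀ c : K × J → ℝ, ∑ x, c x • v x = 0 → IsBlockConstant c)
    {s : Finset (K × J)} (hs : #s < 2 * Fintype.card J) :
    AffineIndependent ℝ (fun x : s => v x) := by
  classical
  rw [affineIndependent_iff_of_fintype]
  intro c hc0 hc1 x
  rw [univ.weightedVSub_eq_linear_combination hc0] at hc1
  let d : K × J → ℝ := fun y => if h : y ∈ s then c ⟨y, h⟩ else 0
  have hd0 : d = 0 := by
    refine (hv d ?_).eq_zero_of_card_lt (fun y hy => dif_neg hy) hs ?_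
    · rw [← hc1, ← Fintype.sum_dite_mem]
      simp only [d, dite_smul, zero_smul]
    · rw [← hc0, ← Fintype.sum_dite_mem]
  simpa [d] using congrFun hd0 x

end BlockConfiguration

theorem exists_affineIndependent_triple_of_finrank_vectorSpan_eq_two {ι E : Type*} [Fintype ι]
    [AddCommGroup E] [Module ℝ E] {v : ι → E}
    (hv : ∀ s : Finset ι, #s = 4 → AffineIndependent ℝ (fun x : s => v x))
    {S : Set E} (hS : S ⊆ Set.range v) (hdim : finrank ℝ (vectorSpan ℝ S) = 2) :
    ∃ a b c : E, AffineIndependent ℝ ![a, b, c] ∧ S = {a, b, c} := by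
  classical
  set t := univ.filter (fun i => v i ∈ S)
  have hSt : S = ↑(t.image v) := by
    ext x
    refine ⟨fun hx => ?_, fun hx => ?_⟩
    · obtain ⟨i, rfl⟩ := hS hx
      simpa [t] using ⟨i, hx, rfl⟩
    · obtain ⟨i, hi, rfl⟩ := Finset.mem_image.1 hx
      exact (mem_filter.1 hi).2
  have hcard_le : #t ≤ 3 := by
    by_contra! h
    obtain ⟨s, hst, hs⟩ := exists_subset_card_eq (show 4 ≤ #t by omega)
    have hsS : Set.range (fun x : s => v x) ⊆ S := by
      rintro _ ⟨x, rfl⟩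
      exact (mem_filter.1 (hst x.2)).2
    have : FiniteDimensional ℝ (vectorSpan ℝ S) :=
      finiteDimensional_vectorSpan_of_finite ℝ (hSt ▸ (t.image v).finite_toSet)
    have := (hv s hs).card_le_finrank_succ.trans
      (Nat.add_le_add_right (Submodule.finrank_mono (vectorSpan_mono ℝ hsS)) 1)
    simp [hs, hdim] at this
  have hcard_ge : 3 ≤ #t := by
    rcases t.eq_empty_or_nonempty with ht | ht
    · rw [hSt, ht, image_empty, coe_empty, vectorSpan_empty, finrank_bot] at hdim
      omega
    · obtain ⟨n, hn⟩ := Nat.exists_eq_add_of_lt ht.card_pos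
      have := finrank_vectorSpan_image_finset_le ℝ v t hn
      rw [← hSt, hdim] at this
      omega
  obtain ⟨x, y, z, -, -, -, hxyz⟩ := card_eq_three.1 (le_antisymm hcard_le hcard_ge)
  have hS3 : S = {v x, v y, v z} := by simp [hSt, hxyz]
  refine ⟨v x, v y, v z, ?_, hS3⟩
  rw [affineIndependent_iff_finrank_vectorSpan_eq ℝ _ (by simp : Fintype.card (Fin 3) = 2 + 1),
    Matrix.range_cons, Matrix.range_cons_cons_empty, Set.singleton_union, ← hS3]
  exact hdim

theorem IsExtreme.extremePoints_subset_of_convexHull {E : Type*} [AddCommGroup E] [Module ℝ E]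
    {W F : Set E} (hF : IsExtreme ℝ (convexHull ℝ W) F) : F.extremePoints ℝ ⊆ W :=
  fun _ hx => extremePoints_convexHull_subset (hF.extremePoints_subset_extremePoints hx)

theorem IsExtreme.eq_convexHull_extremePoints {E : Type*} [NormedAddCommGroup E]
    [NormedSpace ℝ E] {W F : Set E} (hW : W.Finite) (hF : IsExtreme ℝ (convexHull ℝ W) F)
    (hFc : IsClosed F) (hFconv : Convex ℝ F) : F = convexHull ℝ (F.extremePoints ℝ) :=
  calc F = closure (convexHull ℝ (F.extremePoints ℝ)) :=
        (closure_convexHull_extremePoints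
          ((hW.isCompact_convexHull ℝ).of_isClosed_subset hFc hF.1) hFconv).symm
    _ = convexHull ℝ (F.extremePoints ℝ) :=
        ((hW.subset hF.extremePoints_subset_of_convexHull).isClosed_convexHull ℝ).closure_eq

theorem eq_of_sum_smul_equilateral_eq_zero {a : Fin 3 → ℝ}
    (h : ∑ j, a j • (![(1, 0), (-1/2, Real.sqrt 3 / 2), (-1/2, -(Real.sqrt 3 / 2))] :
      Fin 3 → ℝ × ℝ) j = 0)
    (j j' : Fin 3) : a j = a j' := by
  simp only [Fin.sum_univ_three, Fin.isValue, Matrix.cons_val_zero, Prod.smul_mk, smul_eq_mul,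
    mul_one, mul_zero, Matrix.cons_val_one, Prod.mk_add_mk, zero_add, Matrix.cons_val, mul_neg,
    Prod.ext_iff, Prod.fst_zero, Prod.snd_zero] at h
  have h12 : a 1 = a 2 := by
    have : (a 1 - a 2) * (Real.sqrt 3 / 2) = 0 := by linarith [h.2]
    exact sub_eq_zero.1 ((mul_eq_zero.1 this).resolve_right (by positivity))
  have h01 : a 0 = a 1 := by linarith
  fin_cases j <;> fin_cases j' <;> simp [h01, h12]

noncomputable def blockCoords (k : Fin 3) : EuclideanSpace ℝ (Fin 6) →ₗ[ℝ] ℝ × ℝ :=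
  (EuclideanSpace.projₗ ⟨2 * k, by omega⟩).prod (EuclideanSpace.projₗ ⟨2 * k + 1, by omega⟩)

theorem blockCoords_apply_of_coord_eq {t : Fin 3 → ℝ × ℝ}
    {w : Fin 3 → Fin 3 → EuclideanSpace ℝ (Fin 6)}
    (hw : ∀ k j i, w k j i =
      if (i : ℕ) = 2 * (k : ℕ) then (t j).1
      else if (i : ℕ) = 2 * (k : ℕ) + 1 then (t j).2 else 0)
    (k k' j : Fin 3) : blockCoords k (w k' j) = if k' = k then t j else 0 := by
  rcases eq_or_ne k' k with rfl | hk
  · ext <;> simp [blockCoords, hw]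
  · have : (k : ℕ) ≠ k' := fun h => hk (Fin.ext h).symm
    ext <;> simp [blockCoords, hw, hk, this] <;> omega

/-- Every two-dimensional face of a polytope spanned by any subset of the nine vertices
of the free sum of three equilateral triangles (the Delone polytope of `E6*`) is a
triangle. -/
theorem stmt_11
    (t : Fin 3 → ℝ × ℝ)
    (ht : t = ![(1, 0), (-1/2, Real.sqrt 3 / 2), (-1/2, -(Real.sqrt 3 / 2))])
    (w : Fin 3 → Fin 3 → EuclideanSpace ℝ (Fin 6))
    (hw : ∀ k j i, w k j i =
      if (i : ℕ) = 2 * (k : ℕ) then (t j).1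
      else if (i : ℕ) = 2 * (k : ℕ) + 1 then (t j).2 else 0)
    (W : Set (EuclideanSpace ℝ (Fin 6)))
    (hW : W ⊆ {p | ∃ k j, p = w k j})
    (P : Set (EuclideanSpace ℝ (Fin 6)))
    (hP : P = convexHull ℝ W)
    (F : Set (EuclideanSpace ℝ (Fin 6)))
    (hFc : IsClosed F) (hFconv : Convex ℝ F)
    (hF : IsExtreme ℝ P F)
    (hdim : Module.finrank ℝ (vectorSpan ℝ F) = 2) :
    ∃ a b c : EuclideanSpace ℝ (Fin 6),
      AffineIndependent ℝ ![a, b, c] ∧ F = convexHull ℝ {a, b, c} := by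
  subst hP
  have hWv : W ⊆ Set.range (Function.uncurry w) := fun _ hx => by
    obtain ⟨k, j, rfl⟩ := hW hx
    exact ⟨(k, j), rfl⟩
  have hFS := hF.eq_convexHull_extremePoints ((Set.finite_range _).subset hWv) hFc hFconv
  have hrel := isBlockConstant_of_sum_smul_eq_zero (v := Function.uncurry w) blockCoords t
    (blockCoords_apply_of_coord_eq hw) fun a ha => eq_of_sum_smul_equilateral_eq_zero (ht ▸ ha)
  obtain ⟨a, b, c, habc, hS⟩ := exists_affineIndependent_triple_of_finrank_vectorSpan_eq_two
    (fun s hs => affineIndependent_of_card_lt hrel (by simp [hs]))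
    (hF.extremePoints_subset_of_convexHull.trans hWv)
    (by rwa [← direction_affineSpan, ← affineSpan_convexHull, ← hFS, direction_affineSpan])
  exact ⟨a, b, c, habc, hS ▸ hFS⟩
end

section
/- In the seven-dimensional diplo-simplex Q, every two vertices that are not opposite are joined by an edge: for any x, y ∈ range v ∪ range (fun i => −v i) with x ≠ y and x ≠ −y, the segment from x to y is a face of Q, i.e. IsExtreme ℝ Q (segment ℝ x y). -/
/-!
Write the two vertices as `x = ε • v i` and `y = δ • v j` with `|ε| = |δ| = 1`; then `i ≠ j`.
Since the `v k` form an affine basis with centroid `0`, there is a linear functional `f` with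
`f (v k) = ε [k = i] + δ [k = j] - (ε + δ) / N`, where `N = 8` is the number of vertices of the
simplex. Because `N > 4`, on the vertices `±v k` it is maximal exactly at `x` and `y`, and a
supporting hyperplane of the convex hull of a set `S` cuts out the convex hull of the points
of `S` lying on it.
-/

open Set

section Face

variable {𝕜 E : Type*} [Field 𝕜] [LinearOrder 𝕜] [IsStrictOrderedRing 𝕜]
  [AddCommGroup E] [Module 𝕜 E]

lemma isExtreme_setOf_eq_of_forall_le {A : Set E} (f : E →ₗ[𝕜] 𝕜) {c : 𝕜}
    (hA : ∀ a ∈ A, f a ≤ c) : IsExtreme 𝕜 A {a ∈ A | f a = c} := by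
  refine ⟨sep_subset _ _, ?_⟩
  rintro x₁ hx₁ x₂ hx₂ p ⟨-, hfp⟩ ⟨a, b, ha, hb, hab, rfl⟩
  have h₁ := hA x₁ hx₁
  have h₂ := hA x₂ hx₂
  simp only [map_add, map_smul, smul_eq_mul] at hfp
  have hc : a * c + b * c = c := by rw [← add_mul, hab, one_mul]
  refine ⟨hx₁, le_antisymm h₁ (not_lt.1 fun h => ?_)⟩
  linarith [mul_lt_mul_of_pos_left h ha, mul_le_mul_of_nonneg_left h₂ hb.le]

lemma mem_convexHull_setOf_eq_of_forall_le {S : Set E} (f : E →ₗ[𝕜] 𝕜) {c : 𝕜}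
    (hS : ∀ s ∈ S, f s ≤ c) {p : E} (hp : p ∈ convexHull 𝕜 S) (hfp : f p = c) :
    p ∈ convexHull 𝕜 {s ∈ S | f s = c} := by
  classical
  obtain ⟨ι, _, w, z, hw₀, hw₁, hz, rfl⟩ := mem_convexHull_iff_exists_fintype.1 hp
  have hslack : ∀ i, w i * (c - f (z i)) = 0 := by
    refine fun i => (Finset.sum_eq_zero_iff_of_nonneg fun i _ =>
      mul_nonneg (hw₀ i) (sub_nonneg.2 (hS _ (hz i)))).1 ?_ i (Finset.mem_univ i)
    simp [mul_sub, Finset.sum_sub_distrib, ← Finset.sum_mul, hw₁, ← hfp]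
  rw [← Finset.centerMass_eq_of_sum_1 _ _ hw₁, ← Finset.centerMass_filter_ne_zero]
  refine Finset.centerMass_mem_convexHull _ (fun i _ => hw₀ i)
    (by rw [Finset.sum_filter_ne_zero, hw₁]; exact one_pos) fun i hi => ⟨hz i, ?_⟩
  have := (mul_eq_zero.1 (hslack i)).resolve_left (Finset.mem_filter.1 hi).2
  exact (sub_eq_zero.1 this).symm

theorem isExtreme_convexHull_setOf_eq {S : Set E} (f : E →ₗ[𝕜] 𝕜) {c : 𝕜}
    (hS : ∀ s ∈ S, f s ≤ c) :
    IsExtreme 𝕜 (convexHull 𝕜 S) (convexHull 𝕜 {s ∈ S | f s = c}) := by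
  have hle : ∀ p ∈ convexHull 𝕜 S, f p ≤ c := fun p hp =>
    convexHull_min hS (convex_halfSpace_le f.isLinear c) hp
  have hface : convexHull 𝕜 {s ∈ S | f s = c} = {p ∈ convexHull 𝕜 S | f p = c} := by
    refine Subset.antisymm (convexHull_min ?_ ?_) fun p ⟨hp, hfp⟩ =>
      mem_convexHull_setOf_eq_of_forall_le f hS hp hfp
    · exact fun s ⟨hs, hfs⟩ => ⟨subset_convexHull 𝕜 S hs, hfs⟩
    · exact (convex_convexHull 𝕜 S).inter (convex_hyperplane f.isLinear c)
  rw [hface]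
  exact isExtreme_setOf_eq_of_forall_le f hle

end Face

theorem AffineBasis.exists_linearMap_apply_eq_sub_average {ι 𝕜 V : Type*} [Fintype ι]
    [Field 𝕜] [CharZero 𝕜] [AddCommGroup V] [Module 𝕜 V] (b : AffineBasis ι 𝕜 V)
    (hb : ∑ i, b i = 0) (a : ι → 𝕜) :
    ∃ f : V →ₗ[𝕜] 𝕜, ∀ j, f (b j) = a j - (∑ i, a i) / Fintype.card ι := by
  classical
  have hcentroid : Finset.univ.centroid 𝕜 b = 0 := by
    rw [Finset.centroid, Finset.affineCombination_eq_linear_combination]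
    · simp [Finset.centroidWeights, ← Finset.smul_sum, hb]
    · exact Finset.univ.sum_centroidWeights_eq_one_of_nonempty 𝕜
        (Finset.univ_nonempty_iff.2 b.nonempty)
  refine ⟨∑ i, a i • (b.coord i).linear, fun j => ?_⟩
  have hlin : ∀ i, (b.coord i).linear (b j) = b.coord i (b j) - (Fintype.card ι : 𝕜)⁻¹ := by
    intro i
    have := (b.coord i).linearMap_vsub (b j) 0
    rwa [vsub_eq_sub, sub_zero, vsub_eq_sub, ← hcentroid,
      b.coord_apply_centroid (Finset.mem_univ i), Finset.card_univ] at this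
  simp only [LinearMap.sum_apply, LinearMap.smul_apply, hlin, smul_eq_mul]
  simp [AffineBasis.coord_apply, mul_sub, Finset.sum_sub_distrib, ← Finset.sum_mul,
    div_eq_mul_inv]

lemma mul_self_eq_one_of_abs_eq_one {R : Type*} [Ring R] [LinearOrder R] {ε : R}
    (hε : |ε| = 1) : ε * ε = 1 := by
  rw [← abs_mul_abs_self, hε, one_mul]

section DiploSimplex

variable {𝕜 E ι : Type*} [Field 𝕜] [LinearOrder 𝕜] [IsStrictOrderedRing 𝕜]
  [AddCommGroup E] [Module 𝕜 E]

lemma mem_range_union_range_neg_iff {v : ι → E} {x : E} :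
    x ∈ range v ∪ range (fun i => -v i) ↔ ∃ i, ∃ ε : 𝕜, |ε| = 1 ∧ x = ε • v i := by
  constructor
  · rintro (⟨i, rfl⟩ | ⟨i, rfl⟩)
    exacts [⟨i, 1, abs_one, (one_smul _ _).symm⟩, ⟨i, -1, by simp, by simp⟩]
  · rintro ⟨i, ε, hε, rfl⟩
    rcases (abs_eq zero_le_one).1 hε with rfl | rfl
    exacts [Or.inl ⟨i, (one_smul _ _).symm⟩, Or.inr ⟨i, by simp⟩]

theorem isExtreme_convexHull_segment_of_linearMap {v : ι → E} (f : E →ₗ[𝕜] 𝕜)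
    {c ε δ : 𝕜} {i j : ι} (hc : 0 < c) (hε : |ε| = 1) (hδ : |δ| = 1)
    (hi : f (v i) = ε * c) (hj : f (v j) = δ * c)
    (hk : ∀ k, k ≠ i → k ≠ j → |f (v k)| < c) :
    IsExtreme 𝕜 (convexHull 𝕜 (range v ∪ range (fun i => -v i)))
      (segment 𝕜 (ε • v i) (δ • v j)) := by
  have hsigned : ∀ η : 𝕜, |η| = 1 → ∀ k, η * f (v k) ≤ |f (v k)| := fun η hη k =>
    (le_abs_self _).trans (by rw [abs_mul, hη, one_mul])
  have habs : ∀ k, |f (v k)| ≤ c := by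
    intro k
    by_cases hki : k = i
    · rw [hki, hi, abs_mul, hε, one_mul, abs_of_pos hc]
    by_cases hkj : k = j
    · rw [hkj, hj, abs_mul, hδ, one_mul, abs_of_pos hc]
    exact (hk k hki hkj).le
  have hsign : ∀ η ε' : 𝕜, |ε'| = 1 → η * (ε' * c) = c → η = ε' := fun η ε' hε' h =>
    (eq_inv_of_mul_eq_one_left (mul_right_cancel₀ hc.ne' (by rw [mul_assoc, h, one_mul]))).trans
      (inv_eq_of_mul_eq_one_right (mul_self_eq_one_of_abs_eq_one hε'))
  have hvertex : ∀ ε' : 𝕜, |ε'| = 1 → ∀ k, f (v k) = ε' * c → f (ε' • v k) = c := by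
    intro ε' hε' k hk
    rw [map_smul, hk, smul_eq_mul, ← mul_assoc, mul_self_eq_one_of_abs_eq_one hε', one_mul]
  have hface : {s ∈ range v ∪ range (fun i => -v i) | f s = c} = {ε • v i, δ • v j} := by
    ext s
    simp only [mem_range_union_range_neg_iff (𝕜 := 𝕜), mem_insert_iff,
      mem_singleton_iff]
    constructor
    · rintro ⟨⟨k, η, hη, rfl⟩, hfs⟩
      rw [map_smul, smul_eq_mul] at hfs
      by_cases hki : k = i
      · rw [hki, hi] at hfs
        rw [hki, hsign η ε hε hfs]
        exact Or.inl rfl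
      by_cases hkj : k = j
      · rw [hkj, hj] at hfs
        rw [hkj, hsign η δ hδ hfs]
        exact Or.inr rfl
      exact absurd hfs ((hsigned η hη k).trans_lt (hk k hki hkj)).ne
    · rintro (rfl | rfl)
      exacts [⟨⟨i, ε, hε, rfl⟩, hvertex ε hε i hi⟩, ⟨⟨j, δ, hδ, rfl⟩, hvertex δ hδ j hj⟩]
  rw [← convexHull_pair, ← hface]
  refine isExtreme_convexHull_setOf_eq f ?_
  intro s hs
  obtain ⟨k, η, hη, rfl⟩ := (mem_range_union_range_neg_iff (𝕜 := 𝕜)).1 hs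
  rw [map_smul, smul_eq_mul]
  exact (hsigned η hη k).trans (habs k)

theorem AffineBasis.isExtreme_convexHull_segment [Fintype ι] (b : AffineBasis ι 𝕜 E)
    (hb : ∑ i, b i = 0) (hcard : 4 < Fintype.card ι) {x y : E}
    (hx : x ∈ range b ∪ range (fun i => -b i)) (hy : y ∈ range b ∪ range (fun i => -b i))
    (hxy : x ≠ y) (hxy' : x ≠ -y) :
    IsExtreme 𝕜 (convexHull 𝕜 (range b ∪ range (fun i => -b i))) (segment 𝕜 x y) := by
  classical
  obtain ⟨i, ε, hε, rfl⟩ := (mem_range_union_range_neg_iff (𝕜 := 𝕜)).1 hx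
  obtain ⟨j, δ, hδ, rfl⟩ := (mem_range_union_range_neg_iff (𝕜 := 𝕜)).1 hy
  have hεε := mul_self_eq_one_of_abs_eq_one hε
  have hδδ := mul_self_eq_one_of_abs_eq_one hδ
  have hij : i ≠ j := by
    rintro rfl
    have : (ε - δ) * (ε + δ) = 0 := by linear_combination hεε - hδδ
    rcases mul_eq_zero.1 this with h | h
    · exact hxy (by rw [sub_eq_zero.1 h])
    · exact hxy' (by rw [eq_neg_of_add_eq_zero_left h, neg_smul])
  obtain ⟨f, hf⟩ := b.exists_linearMap_apply_eq_sub_average hb (Pi.single i ε + Pi.single j δ)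
  have hN : (4 : 𝕜) < Fintype.card ι := by exact_mod_cast hcard
  have hεδ : ε * δ ≤ 1 := (le_abs_self _).trans (by rw [abs_mul, hε, hδ, one_mul])
  have habs_add : |ε + δ| ≤ 2 := (abs_add_le _ _).trans (by rw [hε, hδ]; norm_num)
  have hsum : ∑ k, (Pi.single i ε + Pi.single j δ : ι → 𝕜) k = ε + δ := by
    simp [Finset.sum_add_distrib]
  refine isExtreme_convexHull_segment_of_linearMap f
    (c := (Fintype.card ι - 1 - ε * δ) / Fintype.card ι) ?_ hε hδ ?_ ?_ ?_
  · apply div_pos <;> linarith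
  · rw [hf, hsum, Pi.add_apply, Pi.single_eq_same, Pi.single_eq_of_ne hij, add_zero]
    field_simp
    linear_combination hεε * δ
  · rw [hf, hsum, Pi.add_apply, Pi.single_eq_same, Pi.single_eq_of_ne hij.symm, zero_add]
    field_simp
    linear_combination hδδ * ε
  · intro k hki hkj
    rw [hf, hsum, Pi.add_apply, Pi.single_eq_of_ne hki, Pi.single_eq_of_ne hkj, add_zero,
      zero_sub, abs_neg, abs_div, Nat.abs_cast]
    exact (div_lt_div_iff_of_pos_right (by linarith)).2 (by linarith)

end DiploSimplex

open Set in
/-- In the seven-dimensional diplo-simplex (the Delone polytope of `E7*`), every two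
vertices that are not opposite are joined by an edge. -/
theorem stmt_12
    (v : Fin 8 → EuclideanSpace ℝ (Fin 7))
    (hv : AffineIndependent ℝ v)
    (hsum : ∑ i, v i = 0)
    (Q : Set (EuclideanSpace ℝ (Fin 7)))
    (hQ : Q = convexHull ℝ (range v ∪ range (fun i => -v i))) :
    ∀ x ∈ range v ∪ range (fun i => -v i),
      ∀ y ∈ range v ∪ range (fun i => -v i),
        x ≠ y → x ≠ -y → IsExtreme ℝ Q (segment ℝ x y) := by
  have hspan : affineSpan ℝ (range v) = ⊤ :=
    hv.affineSpan_eq_top_iff_card_eq_finrank_add_one.2 (by simp)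
  intro x hx y hy hxy hxy'
  subst hQ
  exact (AffineBasis.mk v hv hspan).isExtreme_convexHull_segment hsum (by simp) hx hy hxy hxy'
end

section
/- The seven-dimensional diplo-simplex Q has exactly 16 vertices: the set of extreme points of Q equals range v ∪ range (fun i => −v i), and this set has exactly 16 elements. -/
/-!
Use barycentric coordinates with respect to the simplex `v`. Since `∑ i, v i = 0`, the point
`-v j` is the affine combination `∑ i, (2 / 8 - δ i j) • v i`, so the `k`-th coordinate equals `1`
at `v k` and is at most `2 / 8 < 1` at every other point `± v j`, while its negative is largest
exactly at `-v k`. A point of a set at which some affine function is strictly largest is an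
extreme point of the convex hull; the same coordinates separate the `v i` from the `-v j`.
-/

open Set

section ExtremePoints

variable {𝕜 E : Type*} [Field 𝕜] [LinearOrder 𝕜] [IsStrictOrderedRing 𝕜]
  [AddCommGroup E] [Module 𝕜 E]

theorem convex_setOf_eq_or_lt (f : E →ᵃ[𝕜] 𝕜) (x : E) : Convex 𝕜 {y | y = x ∨ f y < f x} := by
  rw [convex_iff_forall_pos]
  intro y hy z hz a b ha hb hab
  have hle : ∀ w ∈ {y | y = x ∨ f y < f x}, f w ≤ f x := by
    rintro w (rfl | hw); exacts [le_rfl, hw.le]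
  by_cases hyz : y = x ∧ z = x
  · obtain ⟨rfl, rfl⟩ := hyz
    exact Or.inl (Convex.combo_self hab _)
  · right
    obtain rfl : a = 1 - b := by linarith
    have hstrict : f y < f x ∨ f z < f x := by
      rcases not_and_or.1 hyz with hy' | hz'
      exacts [Or.inl (hy.resolve_left hy'), Or.inr (hz.resolve_left hz')]
    rw [Convex.combo_affine_apply hab, smul_eq_mul, smul_eq_mul]
    rcases hstrict with h | h <;> nlinarith [hle y hy, hle z hz]

theorem mem_extremePoints_convexHull_of_forall_lt {s : Set E} {x : E} (f : E →ᵃ[𝕜] 𝕜)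
    (hx : x ∈ s) (hlt : ∀ y ∈ s, y ≠ x → f y < f x) :
    x ∈ (convexHull 𝕜 s).extremePoints 𝕜 := by
  have hhull : convexHull 𝕜 s ⊆ {y | y = x ∨ f y < f x} :=
    convexHull_min (fun y hy => or_iff_not_imp_left.2 (hlt y hy)) (convex_setOf_eq_or_lt f x)
  have hsdiff : convexHull 𝕜 s \ {x} = convexHull 𝕜 s ∩ f ⁻¹' Iio (f x) := by
    ext y
    refine ⟨fun ⟨hy, hne⟩ => ⟨hy, (hhull hy).resolve_left hne⟩, fun ⟨hy, hlt⟩ => ⟨hy, ?_⟩⟩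
    rintro rfl
    exact lt_irrefl _ hlt
  rw [(convex_convexHull 𝕜 s).mem_extremePoints_iff_convex_sdiff, hsdiff]
  exact ⟨subset_convexHull 𝕜 s hx,
    (convex_convexHull 𝕜 s).inter ((convex_Iio (f x)).affine_preimage f)⟩

end ExtremePoints

namespace AffineBasis

variable {ι 𝕜 E : Type*} [Fintype ι] [Field 𝕜] [AddCommGroup E] [Module 𝕜 E]

theorem coord_neg_of_sum_eq_zero [DecidableEq ι] [CharZero 𝕜] (b : AffineBasis ι 𝕜 E)
    (hsum : ∑ i, b i = 0) (k j : ι) :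
    b.coord k (-b j) = 2 / Fintype.card ι - if k = j then 1 else 0 := by
  have : Nonempty ι := b.nonempty
  set w : ι → 𝕜 := fun i => 2 / Fintype.card ι - if i = j then 1 else 0
  have hw : ∑ i, w i = 1 := by
    simp only [w, Finset.sum_sub_distrib, Finset.sum_const, Finset.card_univ, nsmul_eq_mul,
      Finset.sum_ite_eq', Finset.mem_univ, ↓reduceIte]
    rw [mul_div_cancel₀ _ (Nat.cast_ne_zero.2 Fintype.card_ne_zero)]
    norm_num
  have hcomb : Finset.univ.affineCombination 𝕜 b w = -b j := by
    rw [Finset.affineCombination_eq_linear_combination _ _ _ hw]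
    simp [w, sub_smul, Finset.sum_sub_distrib, ← Finset.smul_sum, hsum]
  rw [← hcomb, b.coord_apply_combination_of_mem (Finset.mem_univ k) hw]

variable [LinearOrder 𝕜] [IsStrictOrderedRing 𝕜]

theorem coord_neg_lt_one (b : AffineBasis ι 𝕜 E) (hsum : ∑ i, b i = 0)
    (hcard : 3 ≤ Fintype.card ι) (k j : ι) : b.coord k (-b j) < 1 := by
  classical
  have hn : (3 : 𝕜) ≤ Fintype.card ι := by exact_mod_cast hcard
  rw [b.coord_neg_of_sum_eq_zero hsum, sub_lt_iff_lt_add, div_lt_iff₀ (by linarith)]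
  split_ifs <;> linarith

theorem extremePoints_convexHull_range_union_neg (b : AffineBasis ι 𝕜 E)
    (hsum : ∑ i, b i = 0) (hcard : 3 ≤ Fintype.card ι) :
    (convexHull 𝕜 (range b ∪ range (fun i => -b i))).extremePoints 𝕜 =
      range b ∪ range (fun i => -b i) := by
  classical
  refine extremePoints_convexHull_subset.antisymm ?_
  rintro _ (⟨k, rfl⟩ | ⟨k, rfl⟩)
  · refine mem_extremePoints_convexHull_of_forall_lt (b.coord k) (Or.inl ⟨k, rfl⟩) ?_
    rintro _ (⟨j, rfl⟩ | ⟨j, rfl⟩) hne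
    · rw [b.coord_apply_eq, b.coord_apply_ne (by rintro rfl; exact hne rfl)]
      exact zero_lt_one
    · rw [b.coord_apply_eq]
      exact b.coord_neg_lt_one hsum hcard k j
  · have hn : 2 / (Fintype.card ι : 𝕜) < 1 := by
      rw [div_lt_one (by positivity)]
      exact_mod_cast hcard
    refine mem_extremePoints_convexHull_of_forall_lt (-b.coord k) (Or.inr ⟨k, rfl⟩) ?_
    rintro _ (⟨j, rfl⟩ | ⟨j, rfl⟩) hne <;>
      simp only [AffineMap.coe_neg, Pi.neg_apply, b.coord_apply, b.coord_neg_of_sum_eq_zero hsum]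
    · split_ifs <;> linarith
    · have hkj : k ≠ j := by rintro rfl; exact hne rfl
      simp only [hkj, if_false, if_true]
      linarith

theorem ncard_range_union_neg (b : AffineBasis ι 𝕜 E)
    (hsum : ∑ i, b i = 0) (hcard : 3 ≤ Fintype.card ι) :
    (range b ∪ range (fun i => -b i)).ncard = 2 * Fintype.card ι := by
  have hdisj : Disjoint (range b) (range fun i => -b i) := by
    rw [Set.disjoint_left]
    rintro _ ⟨k, rfl⟩ ⟨j, hj⟩
    have := b.coord_neg_lt_one hsum hcard k j
    simp only [hj, b.coord_apply_eq, lt_irrefl] at this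
  rw [ncard_union_eq hdisj, ncard_range_of_injective b.ind.injective,
    ncard_range_of_injective (f := fun i => -b i) (neg_injective.comp b.ind.injective),
    Nat.card_eq_fintype_card]
  ring

end AffineBasis

open Set in
/-- The seven-dimensional diplo-simplex (the Delone polytope of `E7*`) has exactly 16
vertices: its extreme points are the points `± v i`, and there are 16 of them. -/
theorem stmt_13
    (v : Fin 8 → EuclideanSpace ℝ (Fin 7))
    (hv : AffineIndependent ℝ v)
    (hsum : ∑ i, v i = 0)
    (Q : Set (EuclideanSpace ℝ (Fin 7)))
    (hQ : Q = convexHull ℝ (range v ∪ range (fun i => -v i))) :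
    Q.extremePoints ℝ = range v ∪ range (fun i => -v i) ∧
    (range v ∪ range (fun i => -v i)).ncard = 16 := by
  have hspan : affineSpan ℝ (range v) = ⊤ := by
    rw [hv.affineSpan_eq_top_iff_card_eq_finrank_add_one, finrank_euclideanSpace_fin,
      Fintype.card_fin]
  let b : AffineBasis (Fin 8) ℝ (EuclideanSpace ℝ (Fin 7)) := ⟨v, hv, hspan⟩
  have hcard : 3 ≤ Fintype.card (Fin 8) := by decide
  subst hQ
  exact ⟨b.extremePoints_convexHull_range_union_neg hsum hcard,
    b.ncard_range_union_neg hsum hcard⟩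
end

section
/- Let W be any subset of the 16 vertices range v ∪ range (fun i => −v i) of the seven-dimensional diplo-simplex and let P = convexHull ℝ W. Then every vertex of P fails to be joined by an edge to at most one other vertex: for all pairwise distinct x, y, z ∈ W, at least one of the segments from x to y and from x to z is a face of P, i.e. IsExtreme ℝ P (segment ℝ x y) or IsExtreme ℝ P (segment ℝ x z) holds. -/
/-!
Since `v` is affinely independent with `∑ v i = 0`, every `c : ι → ℝ` with `∑ c i = 0` is the
list of values `f (v i)` of a linear functional `f`. Choosing `c = n (e_i + e_j) - 2` (with `n = 8`)
or `c = e_i - e_j`, the functional attains its maximum over the vertices `±v k` exactly at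
`{v i, v j}`, resp. `{v i, -v j}`, and `x ↦ -x` handles `{-v i, -v j}`. So the segment joining two
vertices `x ≠ ±y` of `W` is an exposed, hence extreme, face of `convexHull ℝ W`. Of two distinct
`y, z ∈ W`, at most one equals `-x`.
-/

open Set

theorem LinearIndependent.exists_linearMap_apply_eq {K V V' ι : Type*} [Field K] [AddCommGroup V]
    [Module K V] [AddCommGroup V'] [Module K V'] {u : ι → V} (hu : LinearIndependent K u)
    (d : ι → V') : ∃ f : V →ₗ[K] V', ∀ i, f (u i) = d i := by
  obtain ⟨g, hg⟩ := LinearMap.exists_extend ((Finsupp.linearCombination K d).comp hu.repr)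
  refine ⟨g, fun i => ?_⟩
  have := congr($hg ⟨u i, Submodule.subset_span (mem_range_self i)⟩)
  simpa [hu.repr_eq_single i] using this

theorem AffineIndependent.exists_linearMap_apply_eq {k E ι : Type*} [Field k] [CharZero k]
    [AddCommGroup E] [Module k E] [Fintype ι] {v : ι → E} (hv : AffineIndependent k v)
    (hsum : ∑ i, v i = 0) {c : ι → k} (hc : ∑ i, c i = 0) :
    ∃ f : E →ₗ[k] k, ∀ i, f (v i) = c i := by
  rcases isEmpty_or_nonempty ι with _ | ⟨⟨i₀⟩⟩
  · exact ⟨0, isEmptyElim⟩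
  have hli := (affineIndependent_iff_linearIndependent_vsub k v i₀).mp hv
  obtain ⟨f, hf⟩ := hli.exists_linearMap_apply_eq fun i => c i - c i₀
  -- `f - c` is constant on the `v i`; summing over `i` and using `∑ v = 0 = ∑ c`, the constant is 0.
  have hconst : ∀ i, f (v i) - c i = f (v i₀) - c i₀ := fun i => by
    by_cases hi : i = i₀
    · rw [hi]
    · have : f (v i -ᵥ v i₀) = c i - c i₀ := hf ⟨i, hi⟩
      rw [vsub_eq_sub, map_sub] at this
      linear_combination this
  have hzero : (Fintype.card ι : k) * (f (v i₀) - c i₀) = 0 := by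
    rw [← nsmul_eq_mul, ← Finset.card_univ, ← Finset.sum_const,
      ← Finset.sum_congr rfl fun i _ => hconst i, Finset.sum_sub_distrib, ← map_sum, hsum, hc,
      map_zero, sub_zero]
  have hi₀ : f (v i₀) - c i₀ = 0 :=
    (mul_eq_zero.mp hzero).resolve_left (Nat.cast_ne_zero.mpr (Fintype.card_pos_iff.2 ⟨i₀⟩).ne')
  exact ⟨f, fun i => by linear_combination hconst i + hi₀⟩

section LinearlyExposed

variable {𝕜 E : Type*} [Field 𝕜] [LinearOrder 𝕜] [AddCommGroup E] [Module 𝕜 E]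

variable (𝕜) in
def IsLinearlyExposed (V B : Set E) : Prop :=
  ∃ (f : E →ₗ[𝕜] 𝕜) (a : 𝕜), (∀ w ∈ V, f w ≤ a) ∧ {w ∈ V | f w = a} = B

theorem IsLinearlyExposed.neg {V B : Set E} (h : IsLinearlyExposed 𝕜 V B) (hV : -V = V) :
    IsLinearlyExposed 𝕜 V (-B) := by
  obtain ⟨f, a, hle, rfl⟩ := h
  have hmem : ∀ w, -w ∈ V ↔ w ∈ V := fun w => by rw [← Set.mem_neg, hV]
  refine ⟨-f, a, fun w hw => ?_, ?_⟩
  · simpa using hle (-w) ((hmem w).2 hw)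
  · ext w
    simp [hmem]

variable [IsStrictOrderedRing 𝕜] {f : E →ₗ[𝕜] 𝕜} {a : 𝕜}

theorem LinearMap.apply_eq_of_mem_openSegment_of_apply_eq {p q r : E} (hp : f p ≤ a)
    (hq : f q ≤ a) (hr : r ∈ openSegment 𝕜 p q) (hra : f r = a) : f p = a ∧ f q = a := by
  obtain ⟨s, t, hs, ht, hst, rfl⟩ := hr
  simp only [map_add, map_smul, smul_eq_mul] at hra
  have hsum : s * (a - f p) + t * (a - f q) = 0 := by linear_combination a * hst - hra
  obtain ⟨hp', hq'⟩ := (add_eq_zero_iff_of_nonneg (mul_nonneg hs.le (sub_nonneg.2 hp))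
    (mul_nonneg ht.le (sub_nonneg.2 hq))).1 hsum
  exact ⟨(sub_eq_zero.1 ((mul_eq_zero.1 hp').resolve_left hs.ne')).symm,
    (sub_eq_zero.1 ((mul_eq_zero.1 hq').resolve_left ht.ne')).symm⟩

theorem LinearMap.isExtreme_setOf_apply_eq {A : Set E} (hle : ∀ p ∈ A, f p ≤ a) :
    IsExtreme 𝕜 A {p ∈ A | f p = a} :=
  ⟨sep_subset _ _, fun _ hp _ hq _ hr hrseg =>
    ⟨hp, (f.apply_eq_of_mem_openSegment_of_apply_eq (hle _ hp) (hle _ hq) hrseg hr.2).1⟩⟩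

theorem LinearMap.mem_convexHull_setOf_apply_eq {W : Set E} (hle : ∀ w ∈ W, f w ≤ a) {p : E}
    (hp : p ∈ convexHull 𝕜 W) (hpa : f p = a) : p ∈ convexHull 𝕜 {w ∈ W | f w = a} := by
  set S := {w ∈ W | f w = a}
  have hC : Convex 𝕜 {p | f p ≤ a ∧ (f p = a → p ∈ convexHull 𝕜 S)} := by
    refine convex_iff_openSegment_subset.2 fun p hp q hq r hr => ⟨?_, fun hra => ?_⟩
    · exact (convex_halfSpace_le f.isLinear a).openSegment_subset hp.1 hq.1 hr
    · obtain ⟨hpa, hqa⟩ := f.apply_eq_of_mem_openSegment_of_apply_eq hp.1 hq.1 hr hra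
      exact (convex_convexHull 𝕜 S).openSegment_subset (hp.2 hpa) (hq.2 hqa) hr
  have hWC : W ⊆ {p | f p ≤ a ∧ (f p = a → p ∈ convexHull 𝕜 S)} := fun w hw =>
    ⟨hle w hw, fun hwa => subset_convexHull 𝕜 S ⟨hw, hwa⟩⟩
  exact (convexHull_min hWC hC hp).2 hpa

theorem LinearMap.isExtreme_convexHull_setOf_apply_eq {W : Set E} (hle : ∀ w ∈ W, f w ≤ a) :
    IsExtreme 𝕜 (convexHull 𝕜 W) (convexHull 𝕜 {w ∈ W | f w = a}) := by
  have hle' : ∀ p ∈ convexHull 𝕜 W, f p ≤ a := fun p hp =>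
    convexHull_min hle (convex_halfSpace_le f.isLinear a) hp
  convert f.isExtreme_setOf_apply_eq hle' using 1
  refine Subset.antisymm (fun p hp => ⟨convexHull_mono (sep_subset _ _) hp, ?_⟩)
    fun p hp => f.mem_convexHull_setOf_apply_eq hle hp.1 hp.2
  exact convexHull_min (fun w hw => hw.2) (convex_hyperplane f.isLinear a) hp

theorem IsLinearlyExposed.isExtreme_convexHull {V B W : Set E} (h : IsLinearlyExposed 𝕜 V B)
    (hWV : W ⊆ V) (hBW : B ⊆ W) : IsExtreme 𝕜 (convexHull 𝕜 W) (convexHull 𝕜 B) := by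
  obtain ⟨f, a, hle, rfl⟩ := h
  have hW : {w ∈ W | f w = a} = {w ∈ V | f w = a} :=
    Subset.antisymm (fun w hw => ⟨hWV hw.1, hw.2⟩) fun w hw => ⟨hBW hw, hw.2⟩
  rw [← hW]
  exact f.isExtreme_convexHull_setOf_apply_eq fun w hw => hle w (hWV hw)

end LinearlyExposed

theorem Set.neg_range_union_range_neg {G ι : Type*} [InvolutiveNeg G] (v : ι → G) :
    -(range v ∪ range (fun i => -v i)) = range v ∪ range (fun i => -v i) := by
  ext w
  simp [neg_eq_iff_eq_neg, or_comm]

section DiploSimplex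

variable {E ι : Type*} [AddCommGroup E] [Module ℝ E] {v : ι → E}

theorem isLinearlyExposed_range_union_range_neg {f : E →ₗ[ℝ] ℝ} {a : ℝ}
    (hle : ∀ k, |f (v k)| ≤ a) :
    IsLinearlyExposed ℝ (range v ∪ range (fun i => -v i))
      (v '' {k | f (v k) = a} ∪ (fun k => -v k) '' {k | f (v k) = -a}) := by
  refine ⟨f, a, ?_, ?_⟩
  · rintro _ (⟨k, rfl⟩ | ⟨k, rfl⟩)
    · exact (le_abs_self _).trans (hle k)
    · simpa using (neg_le_abs _).trans (hle k)
  · ext w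
    constructor
    · rintro ⟨⟨k, rfl⟩ | ⟨k, rfl⟩, hk⟩
      · exact Or.inl ⟨k, hk, rfl⟩
      · exact Or.inr ⟨k, by simpa [neg_eq_iff_eq_neg] using hk, rfl⟩
    · rintro (⟨k, hk, rfl⟩ | ⟨k, hk, rfl⟩)
      · exact ⟨Or.inl ⟨k, rfl⟩, hk⟩
      · exact ⟨Or.inr ⟨k, rfl⟩, by simpa using congr_arg Neg.neg hk⟩

variable [Fintype ι] [DecidableEq ι]

theorem isLinearlyExposed_pair_vertex_vertex (hv : AffineIndependent ℝ v) (hsum : ∑ i, v i = 0)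
    (hcard : 4 < Fintype.card ι) {i j : ι} (hij : i ≠ j) :
    IsLinearlyExposed ℝ (range v ∪ range (fun i => -v i)) {v i, v j} := by
  -- `4 < n` is what keeps the opposite vertices `-v k` (value `2`) strictly below the level `n - 2`.
  have hn : (4 : ℝ) < Fintype.card ι := by exact_mod_cast hcard
  set n : ℝ := (Fintype.card ι : ℝ)
  obtain ⟨f, hf⟩ := hv.exists_linearMap_apply_eq hsum
    (c := fun k => n * ((if k = i then 1 else 0) + (if k = j then 1 else 0)) - 2) (by
      simp only [Finset.sum_sub_distrib, ← Finset.mul_sum, Finset.sum_add_distrib,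
        Finset.sum_ite_eq', Finset.mem_univ, if_true, Finset.sum_const, Finset.card_univ,
        nsmul_eq_mul]
      ring)
  have hval : ∀ k, f (v k) = if k = i ∨ k = j then n - 2 else -2 := fun k => by
    rw [hf]
    rcases eq_or_ne k i with rfl | hki
    · simp [hij]
    · rcases eq_or_ne k j with rfl | hkj <;> simp [*]
  have hmax : {k | f (v k) = n - 2} = {i, j} := by
    ext k
    simp only [mem_ofPred_eq, hval, mem_insert_iff, mem_singleton_iff]
    split_ifs with hk
    · simpa using hk
    · simp only [hk, iff_false]
      intro h
      linarith
  have hmin : {k | f (v k) = -(n - 2)} = ∅ := by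
    ext k
    simp only [mem_ofPred_eq, hval, mem_empty_iff_false, iff_false]
    split_ifs <;> linarith
  have hle : ∀ k, |f (v k)| ≤ n - 2 := fun k => by
    rw [hval, abs_le]
    split_ifs <;> constructor <;> linarith
  have h := isLinearlyExposed_range_union_range_neg hle
  rwa [hmax, hmin, image_empty, union_empty, image_pair] at h

theorem isLinearlyExposed_pair_vertex_neg_vertex (hv : AffineIndependent ℝ v)
    (hsum : ∑ i, v i = 0) {i j : ι} (hij : i ≠ j) :
    IsLinearlyExposed ℝ (range v ∪ range (fun i => -v i)) {v i, -v j} := by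
  obtain ⟨f, hf⟩ := hv.exists_linearMap_apply_eq hsum
    (c := fun k => (if k = i then 1 else 0) - (if k = j then 1 else 0)) (by simp)
  have hval : ∀ k, f (v k) = if k = i then 1 else if k = j then -1 else 0 := fun k => by
    rw [hf]
    rcases eq_or_ne k i with rfl | hki
    · simp [hij]
    · rcases eq_or_ne k j with rfl | hkj <;> simp [*]
  have hmax : {k | f (v k) = 1} = {i} := by
    ext k
    simp only [mem_ofPred_eq, hval, mem_singleton_iff]
    split_ifs <;> norm_num [*, hij.symm]
  have hmin : {k | f (v k) = -1} = {j} := by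
    ext k
    simp only [mem_ofPred_eq, hval, mem_singleton_iff]
    split_ifs <;> norm_num [*, hij.symm]
  have hle : ∀ k, |f (v k)| ≤ 1 := fun k => by
    rw [hval]
    split_ifs <;> norm_num
  have h := isLinearlyExposed_range_union_range_neg hle
  rwa [hmax, hmin, image_singleton, image_singleton, singleton_union] at h

theorem isLinearlyExposed_pair_of_ne_of_ne_neg (hv : AffineIndependent ℝ v)
    (hsum : ∑ i, v i = 0) (hcard : 4 < Fintype.card ι) {x y : E}
    (hx : x ∈ range v ∪ range (fun i => -v i)) (hy : y ∈ range v ∪ range (fun i => -v i))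
    (hxy : x ≠ y) (hxy' : x ≠ -y) :
    IsLinearlyExposed ℝ (range v ∪ range (fun i => -v i)) {x, y} := by
  rcases hx with ⟨i, rfl⟩ | ⟨i, rfl⟩ <;> rcases hy with ⟨j, rfl⟩ | ⟨j, rfl⟩
  · exact isLinearlyExposed_pair_vertex_vertex hv hsum hcard (ne_of_apply_ne v hxy)
  · exact isLinearlyExposed_pair_vertex_neg_vertex hv hsum fun hij => by simp [hij] at hxy'
  · rw [pair_comm]
    exact isLinearlyExposed_pair_vertex_neg_vertex hv hsum fun hji => by simp [hji] at hxy'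
  · have hij : i ≠ j := fun hij => by simp [hij] at hxy
    simpa [neg_insert] using (isLinearlyExposed_pair_vertex_vertex hv hsum hcard hij).neg
      (neg_range_union_range_neg v)

theorem isExtreme_convexHull_segment_of_ne_of_ne_neg (hv : AffineIndependent ℝ v)
    (hsum : ∑ i, v i = 0) (hcard : 4 < Fintype.card ι) {W : Set E}
    (hW : W ⊆ range v ∪ range (fun i => -v i)) {x y : E} (hx : x ∈ W) (hy : y ∈ W)
    (hxy : x ≠ y) (hxy' : x ≠ -y) :
    IsExtreme ℝ (convexHull ℝ W) (segment ℝ x y) := by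
  rw [← convexHull_pair]
  exact (isLinearlyExposed_pair_of_ne_of_ne_neg hv hsum hcard (hW hx) (hW hy) hxy
    hxy').isExtreme_convexHull hW (pair_subset hx hy)

end DiploSimplex

open Set in
/-- For any subset `W` of the 16 vertices of the seven-dimensional diplo-simplex
(the Delone polytope of `E7*`) and `P = convexHull ℝ W`, every vertex of `P` fails to be
joined by an edge to at most one other vertex: for pairwise distinct `x, y, z ∈ W`,
at least one of the segments `[x, y]` and `[x, z]` is a face of `P`. -/
theorem stmt_14
    (v : Fin 8 → EuclideanSpace ℝ (Fin 7))
    (hv : AffineIndependent ℝ v)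
    (hsum : ∑ i, v i = 0)
    (W : Set (EuclideanSpace ℝ (Fin 7)))
    (hW : W ⊆ range v ∪ range (fun i => -v i))
    (P : Set (EuclideanSpace ℝ (Fin 7)))
    (hP : P = convexHull ℝ W) :
    ∀ x ∈ W, ∀ y ∈ W, ∀ z ∈ W, x ≠ y → x ≠ z → y ≠ z →
      IsExtreme ℝ P (segment ℝ x y) ∨ IsExtreme ℝ P (segment ℝ x z) := by
  subst hP
  intro x hx y hy z hz hxy hxz hyz
  have hedge : ∀ {y}, y ∈ W → x ≠ y → x ≠ -y → IsExtreme ℝ (convexHull ℝ W) (segment ℝ x y) :=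
    fun hy => isExtreme_convexHull_segment_of_ne_of_ne_neg hv hsum (by decide) hW hx hy
  by_cases hxy' : x = -y
  · exact Or.inr (hedge hz hxz fun hxz' => hyz (neg_injective (hxy'.symm.trans hxz')))
  · exact Or.inl (hedge hy hxy hxy')
end

section
/- In the eight-dimensional cross-polytope Q, every two vertices that are not opposite are joined by an edge: for any x, y ∈ range b ∪ range (fun i => −b i) with x ≠ y and x ≠ −y, the segment from x to y is a face of Q, i.e. IsExtreme ℝ Q (segment ℝ x y). -/
open Set in
/-- In the eight-dimensional cross-polytope (a Delone polytope of `E8`), every two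
vertices that are not opposite are joined by an edge. -/
theorem stmt_15
    (b : Fin 8 → EuclideanSpace ℝ (Fin 8))
    (hb : LinearIndependent ℝ b)
    (Q : Set (EuclideanSpace ℝ (Fin 8)))
    (hQ : Q = convexHull ℝ (range b ∪ range (fun i => -b i))) :
    ∀ x ∈ range b ∪ range (fun i => -b i),
      ∀ y ∈ range b ∪ range (fun i => -b i),
        x ≠ y → x ≠ -y → IsExtreme ℝ Q (segment ℝ x y) := by
  classical
  subst hQ
  intro x hx y hy hxy hxny
  set V : Set (EuclideanSpace ℝ (Fin 8)) := range b ∪ range (fun i => -b i) with hVdef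
  obtain ⟨i, s, hs, rfl⟩ : ∃ i s, (s = (1:ℝ) ∨ s = -1) ∧ x = s • b i := by
    rcases hx with ⟨i, rfl⟩ | ⟨i, rfl⟩
    · exact ⟨i, 1, Or.inl rfl, (one_smul ℝ _).symm⟩
    · exact ⟨i, -1, Or.inr rfl, by simp⟩
  obtain ⟨j, t, ht, rfl⟩ : ∃ j t, (t = (1:ℝ) ∨ t = -1) ∧ y = t • b j := by
    rcases hy with ⟨j, rfl⟩ | ⟨j, rfl⟩
    · exact ⟨j, 1, Or.inl rfl, (one_smul ℝ _).symm⟩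
    · exact ⟨j, -1, Or.inr rfl, by simp⟩
  have hij : i ≠ j := by
    rintro rfl
    rcases hs with rfl | rfl <;> rcases ht with rfl | rfl <;> simp_all
  have hcard : Fintype.card (Fin 8) = Module.finrank ℝ (EuclideanSpace ℝ (Fin 8)) := by
    simp [finrank_euclideanSpace]
  let B := basisOfLinearIndependentOfCardEqFinrank hb hcard
  have hB : ⇑B = b := coe_basisOfLinearIndependentOfCardEqFinrank hb hcard
  let f : EuclideanSpace ℝ (Fin 8) →ₗ[ℝ] ℝ := s • B.coord i + t • B.coord j
  have hfb : ∀ k, f (b k) = (if k = i then s else 0) + (if k = j then t else 0) := by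
    intro k
    simp [f, Module.Basis.coord_apply, ← hB, Module.Basis.repr_self, Finsupp.single_apply,
      mul_ite, mul_one, mul_zero]
  have key : ∀ (u : ℝ), (u = 1 ∨ u = -1) → ∀ k,
      f (u • b k) ≤ 1 ∧ (f (u • b k) = 1 → u • b k = s • b i ∨ u • b k = t • b j) := by
    intro u hu k
    have h1 : f (u • b k) = u * ((if k = i then s else 0) + (if k = j then t else 0)) := by
      rw [map_smul, hfb k, smul_eq_mul]
    by_cases h2 : k = i
    · subst h2
      rw [if_pos rfl, if_neg hij] at h1
      rw [add_zero] at h1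
      constructor
      · rcases hu with rfl | rfl <;> rcases hs with rfl | rfl <;> (rw [h1]; norm_num)
      · intro h
        left
        rcases hu with rfl | rfl <;> rcases hs with rfl | rfl <;>
          first | rfl | (rw [h1] at h; norm_num at h)
    · by_cases h3 : k = j
      · subst h3
        rw [if_neg h2, if_pos rfl] at h1
        rw [zero_add] at h1
        constructor
        · rcases hu with rfl | rfl <;> rcases ht with rfl | rfl <;> (rw [h1]; norm_num)
        · intro h
          right
          rcases hu with rfl | rfl <;> rcases ht with rfl | rfl <;>
            first | rfl | (rw [h1] at h; norm_num at h)
      · rw [if_neg h2, if_neg h3] at h1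
        simp only [add_zero, mul_zero] at h1
        exact ⟨by rw [h1]; norm_num, by rw [h1]; norm_num⟩
  have hle : ∀ v ∈ V, f v ≤ 1 := by
    rintro v (⟨k, rfl⟩ | ⟨k, rfl⟩)
    · simpa using (key 1 (Or.inl rfl) k).1
    · have := (key (-1) (Or.inr rfl) k).1
      simpa using this
  have heq1 : ∀ v ∈ V, f v = 1 → v = s • b i ∨ v = t • b j := by
    rintro v (⟨k, rfl⟩ | ⟨k, rfl⟩) h
    · simpa using (key 1 (Or.inl rfl) k).2 (by simpa using h)
    · simpa using (key (-1) (Or.inr rfl) k).2 (by simpa using h)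
  have hfx : f (s • b i) = 1 := by
    rw [map_smul, hfb i, if_pos rfl, if_neg hij, add_zero, smul_eq_mul]
    rcases hs with rfl | rfl <;> norm_num
  have hfy : f (t • b j) = 1 := by
    rw [map_smul, hfb j, if_neg (Ne.symm hij), if_pos rfl, zero_add, smul_eq_mul]
    rcases ht with rfl | rfl <;> norm_num
  have hxQ : s • b i ∈ convexHull ℝ V := subset_convexHull ℝ V hx
  have hyQ : t • b j ∈ convexHull ℝ V := subset_convexHull ℝ V hy
  have hQle : ∀ q ∈ convexHull ℝ V, f q ≤ 1 := by
    intro q hq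
    exact convexHull_min hle (convex_halfSpace_le (LinearMap.isLinear f) 1) hq
  have hVfin : V.Finite := (finite_range b).union (finite_range _)
  have hface : {p ∈ convexHull ℝ V | f p = 1} = segment ℝ (s • b i) (t • b j) := by
    apply Subset.antisymm
    · rintro p ⟨hpQ, hfp⟩
      rw [hVfin.convexHull_eq] at hpQ
      obtain ⟨w, hw0, hw1, hwp⟩ := hpQ
      rw [Finset.centerMass_eq_of_sum_1 _ id hw1] at hwp
      simp only [id_eq] at hwp
      have hsum : ∑ v ∈ hVfin.toFinset, w v * f v = ∑ v ∈ hVfin.toFinset, w v * 1 := by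
        have : f p = ∑ v ∈ hVfin.toFinset, w v * f v := by
          rw [← hwp, map_sum]
          simp [smul_eq_mul]
        simp only [mul_one]
        rw [← this, hfp, hw1]
      have hall := (Finset.sum_eq_sum_iff_of_le (fun v hv =>
        mul_le_mul_of_nonneg_left (hle v (hVfin.mem_toFinset.mp hv))
          (hw0 v (hVfin.mem_toFinset.mp hv)))).mp hsum
      have hzero : ∀ v ∈ hVfin.toFinset, v ≠ s • b i → v ≠ t • b j → w v = 0 := by
        intro v hv hvx hvy
        by_contra hw
        have hfv : f v = 1 := by
          have := hall v hv
          rw [mul_one] at this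
          exact mul_left_cancel₀ hw (this.trans (mul_one (w v)).symm)
        rcases heq1 v (hVfin.mem_toFinset.mp hv) hfv with h | h
        · exact hvx h
        · exact hvy h
      have hxT : s • b i ∈ hVfin.toFinset := hVfin.mem_toFinset.mpr hx
      have hyT : t • b j ∈ hVfin.toFinset := hVfin.mem_toFinset.mpr hy
      have hsub : ({s • b i, t • b j} : Finset (EuclideanSpace ℝ (Fin 8))) ⊆ hVfin.toFinset := by
        intro v hv
        rcases Finset.mem_insert.mp hv with rfl | hv
        · exact hxT
        · rw [Finset.mem_singleton.mp hv]; exact hyT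
      have hp2 : p = w (s • b i) • (s • b i) + w (t • b j) • (t • b j) := by
        rw [← hwp, ← Finset.sum_subset hsub (fun v hv hv' => ?_)]
        · rw [Finset.sum_pair hxy]
        · rw [hzero v hv (fun h => hv' (by rw [h]; exact Finset.mem_insert_self _ _))
            (fun h => hv' (by rw [h]; exact Finset.mem_insert_of_mem (Finset.mem_singleton_self _))),
            zero_smul]
      have hw2 : w (s • b i) + w (t • b j) = 1 := by
        rw [← hw1, ← Finset.sum_subset hsub (fun v hv hv' => ?_)]
        · rw [Finset.sum_pair hxy]
        · exact hzero v hv (fun h => hv' (by rw [h]; exact Finset.mem_insert_self _ _))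
            (fun h => hv' (by rw [h]; exact Finset.mem_insert_of_mem (Finset.mem_singleton_self _)))
      exact ⟨w (s • b i), w (t • b j), hw0 _ hx, hw0 _ hy, hw2, hp2.symm⟩
    · rintro p ⟨a, c, ha, hc, hac, rfl⟩
      refine ⟨(convex_convexHull ℝ V).segment_subset hxQ hyQ ⟨a, c, ha, hc, hac, rfl⟩, ?_⟩
      rw [map_add, map_smul f a, map_smul f c, hfx, hfy, smul_eq_mul, smul_eq_mul,
        mul_one, mul_one, hac]
  have hexp : IsExposed ℝ (convexHull ℝ V) (segment ℝ (s • b i) (t • b j)) := by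
    intro _
    refine ⟨LinearMap.toContinuousLinearMap f, ?_⟩
    rw [← hface]
    ext p
    simp only [mem_setOf_eq, LinearMap.coe_toContinuousLinearMap']
    constructor
    · rintro ⟨hp, hfp⟩
      exact ⟨hp, fun q hq => (hQle q hq).trans_eq hfp.symm⟩
    · rintro ⟨hp, hmax⟩
      refine ⟨hp, le_antisymm (hQle p hp) ?_⟩
      have := hmax _ hxQ
      rwa [hfx] at this
  exact hexp.isExtreme
end

section
/- Every two-dimensional face of a 2-neighborly polytope is a triangle: let S be a finite subset of EuclideanSpace ℝ (Fin n) and P = convexHull ℝ S, and assume that for all u, v ∈ S with u ≠ v the segment from u to v is a face of P (IsExtreme ℝ P (segment ℝ u v)). Then for every closed convex set F with IsExtreme ℝ P F whose vector span has ℝ-dimension 2, there exist affinely independent points a, b, c with F = convexHull ℝ {a, b, c}. -/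
/-!
A compact convex face `F` of the polytope is the convex hull of its extreme points, which are
finitely many vertices of the polytope, and segments between them are faces of `F`. Four such
points are affinely independent: otherwise Radon's theorem splits them into two parts with
meeting convex hulls. A part with at most one point cannot meet the hull of the other, since a
vertex is never a convex combination of other points of `F`. If both parts are pairs `{u, v}`,
`{w, z}`, the face `[u, v]` meets `[w, z]` and so contains `w` or `z`, again a vertex in the
hull of other points. In a plane this leaves exactly three vertices.
-/

open Set Module

section TwoNeighborly

variable {𝕜 V : Type*} [Field 𝕜] [LinearOrder 𝕜] [IsStrictOrderedRing 𝕜]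
  [AddCommGroup V] [Module 𝕜 V] {F : Set V}

variable (𝕜) in
/-- 2-neighborliness of a convex set, with its extreme points playing the role of vertices. -/
def IsTwoNeighborly (F : Set V) : Prop :=
  ∀ u ∈ F.extremePoints 𝕜, ∀ v ∈ F.extremePoints 𝕜, u ≠ v → IsExtreme 𝕜 F (segment 𝕜 u v)

theorem IsExtreme.extremePoints_subset_of_convexHull_s17 {S G : Set V}
    (hG : IsExtreme 𝕜 (convexHull 𝕜 S) G) : G.extremePoints 𝕜 ⊆ S :=
  hG.extremePoints_subset_extremePoints.trans extremePoints_convexHull_subset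

theorem IsExtreme.isTwoNeighborly {S G : Set V}
    (hneigh : ∀ u ∈ S, ∀ v ∈ S, u ≠ v → IsExtreme 𝕜 (convexHull 𝕜 S) (segment 𝕜 u v))
    (hG : IsExtreme 𝕜 (convexHull 𝕜 S) G) (hGconv : Convex 𝕜 G) : IsTwoNeighborly 𝕜 G :=
  fun u hu v hv huv ↦
    (hneigh u (hG.extremePoints_subset_of_convexHull_s17 hu) v
      (hG.extremePoints_subset_of_convexHull_s17 hv) huv).mono hG.subset
      (hGconv.segment_subset hu.1 hv.1)

theorem notMem_convexHull_of_mem_extremePoints (hF : Convex 𝕜 F) {x : V}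
    (hx : x ∈ F.extremePoints 𝕜) {B : Set V} (hBF : B ⊆ F) (hxB : x ∉ B) :
    x ∉ convexHull 𝕜 B := fun h ↦
  (hF.mem_extremePoints_iff_mem_sdiff_convexHull_sdiff.1 hx).2
    (convexHull_mono (subset_sdiff.2 ⟨hBF, disjoint_singleton_right.2 hxB⟩) h)

theorem IsExtreme.left_mem_or_right_mem_of_mem_segment {A G : Set V} (hG : IsExtreme 𝕜 A G)
    {w z x : V} (hw : w ∈ A) (hz : z ∈ A) (hxG : x ∈ G) (hx : x ∈ segment 𝕜 w z) :
    w ∈ G ∨ z ∈ G := by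
  rw [← insert_endpoints_openSegment] at hx
  rcases hx with rfl | rfl | hx
  · exact .inl hxG
  · exact .inr hxG
  · exact .inl (hG.left_mem_of_mem_openSegment hw hz hxG hx)

theorem disjoint_segment_of_isExtreme_segment (hF : Convex 𝕜 F) {u v w z : V}
    (hu : u ∈ F) (hv : v ∈ F) (hw : w ∈ F.extremePoints 𝕜) (hz : z ∈ F.extremePoints 𝕜)
    (huv : IsExtreme 𝕜 F (segment 𝕜 u v)) (hdisj : Disjoint ({u, v} : Set V) {w, z}) :
    Disjoint (segment 𝕜 u v) (segment 𝕜 w z) := by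
  have hnot : ∀ y ∈ ({w, z} : Set V), y ∈ F.extremePoints 𝕜 → y ∉ segment 𝕜 u v := by
    intro y hy hyF
    rw [← convexHull_pair]
    exact notMem_convexHull_of_mem_extremePoints hF hyF (pair_subset hu hv)
      (disjoint_right.1 hdisj hy)
  refine disjoint_left.2 fun x hxuv hxwz ↦ ?_
  rcases huv.left_mem_or_right_mem_of_mem_segment hw.1 hz.1 hxuv hxwz with h | h
  · exact hnot w (mem_insert _ _) hw h
  · exact hnot z (mem_insert_of_mem _ rfl) hz h

theorem IsTwoNeighborly.disjoint_convexHull (hF : Convex 𝕜 F) (hneigh : IsTwoNeighborly 𝕜 F)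
    {A B : Set V} (hA : A ⊆ F.extremePoints 𝕜) (hB : B ⊆ F.extremePoints 𝕜)
    (hAfin : A.Finite) (hBfin : B.Finite) (hAB : Disjoint A B)
    (hcard : A.ncard + B.ncard ≤ 4) :
    Disjoint (convexHull 𝕜 A) (convexHull 𝕜 B) := by
  wlog hle : A.ncard ≤ B.ncard generalizing A B
  · exact (this hB hA hBfin hAfin hAB.symm (by omega) (by omega)).symm
  obtain hA1 | ⟨hA2, hB2⟩ : A.ncard ≤ 1 ∨ A.ncard = 2 ∧ B.ncard = 2 := by omega
  · obtain rfl | ⟨a, rfl⟩ := (ncard_le_one_iff_eq hAfin).1 hA1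
    · simp
    rw [convexHull_singleton, disjoint_singleton_left]
    exact notMem_convexHull_of_mem_extremePoints hF (hA rfl)
      (hB.trans extremePoints_subset) (disjoint_singleton_left.1 hAB)
  · obtain ⟨u, v, huv, rfl⟩ := ncard_eq_two.1 hA2
    obtain ⟨w, z, -, rfl⟩ := ncard_eq_two.1 hB2
    rw [convexHull_pair, convexHull_pair]
    exact disjoint_segment_of_isExtreme_segment hF (extremePoints_subset (hA (mem_insert _ _)))
      (extremePoints_subset (hA (mem_insert_of_mem _ rfl))) (hB (mem_insert _ _))
      (hB (mem_insert_of_mem _ rfl))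
      (hneigh u (hA (mem_insert _ _)) v (hA (mem_insert_of_mem _ rfl)) huv) hAB

theorem IsTwoNeighborly.affineIndependent (hF : Convex 𝕜 F) (hneigh : IsTwoNeighborly 𝕜 F)
    {t : Finset V} (ht : ↑t ⊆ F.extremePoints 𝕜) (hcard : t.card ≤ 4) :
    AffineIndependent 𝕜 ((↑) : t → V) := by
  by_contra h
  obtain ⟨I, hI⟩ := Convex.radon_partition h
  have hsub : ∀ J : Set t, ((↑) '' J : Set V) ⊆ F.extremePoints 𝕜 := by
    rintro J _ ⟨x, -, rfl⟩
    exact ht x.2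
  have hdisj : Disjoint ((↑) '' I : Set V) ((↑) '' Iᶜ) :=
    disjoint_image_of_injective Subtype.val_injective disjoint_compl_right
  refine not_disjoint_iff_nonempty_inter.2 hI (hneigh.disjoint_convexHull hF (hsub I) (hsub Iᶜ)
    (toFinite _) (toFinite _) hdisj ?_)
  calc _ = ((↑) '' I ∪ (↑) '' Iᶜ : Set V).ncard := (ncard_union_eq hdisj).symm
    _ ≤ (t : Set V).ncard := ncard_le_ncard (by rintro _ (⟨x, -, rfl⟩ | ⟨x, -, rfl⟩) <;> exact x.2)
    _ ≤ 4 := by rwa [ncard_coe_finset]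

theorem IsTwoNeighborly.card_le_three (hF : Convex 𝕜 F) (hneigh : IsTwoNeighborly 𝕜 F)
    {T : Finset V} (hT : ↑T ⊆ F.extremePoints 𝕜)
    (hdim : finrank 𝕜 (vectorSpan 𝕜 (T : Set V)) ≤ 2) : T.card ≤ 3 := by
  by_contra! hcard
  obtain ⟨t, htT, ht4⟩ := Finset.exists_subset_card_eq (show 4 ≤ T.card by omega)
  have hind := (hneigh.affineIndependent hF ((Finset.coe_subset.2 htT).trans hT)
    ht4.le).card_le_finrank_succ
  rw [Fintype.card_coe] at hind
  have := finiteDimensional_vectorSpan_of_finite 𝕜 T.finite_toSet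
  have hmono := Submodule.finrank_mono (vectorSpan_mono 𝕜
    (show range ((↑) : t → V) ⊆ T by rintro _ ⟨x, rfl⟩; exact htT x.2))
  omega

theorem IsTwoNeighborly.exists_extremePoints_eq_triple (hF : Convex 𝕜 F)
    (hneigh : IsTwoNeighborly 𝕜 F) (hfin : (F.extremePoints 𝕜).Finite)
    (hdim : finrank 𝕜 (vectorSpan 𝕜 (F.extremePoints 𝕜)) = 2) :
    ∃ a b c, AffineIndependent 𝕜 ![a, b, c] ∧ F.extremePoints 𝕜 = {a, b, c} := by
  classical
  set T := hfin.toFinset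
  have hT : (T : Set V) = F.extremePoints 𝕜 := hfin.coe_toFinset
  have hle : T.card ≤ 3 := hneigh.card_le_three hF hT.subset (by rw [hT, hdim])
  have hne : T.Nonempty := by
    rw [← Finset.coe_nonempty, hT]
    by_contra! h
    rw [h, vectorSpan_empty, finrank_bot] at hdim
    exact absurd hdim (by decide)
  have hge := finrank_vectorSpan_image_finset_le 𝕜 id T (n := T.card - 1) (by
    have := hne.card_pos; omega)
  rw [Finset.image_id, hT, hdim] at hge
  obtain ⟨a, b, c, -, -, -, habc⟩ := Finset.card_eq_three.1 (show T.card = 3 by omega)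
  have hE : F.extremePoints 𝕜 = {a, b, c} := by rw [← hT, habc]; push_cast; rfl
  refine ⟨a, b, c, ?_, hE⟩
  rw [affineIndependent_iff_finrank_vectorSpan_eq 𝕜 _ (show Fintype.card (Fin 3) = 2 + 1 from rfl)]
  have hr : range ![a, b, c] = {a, b, c} := by
    ext; simp [or_comm, or_left_comm]
  rwa [hr, ← hE]

end TwoNeighborly

/-- Every two-dimensional face of a 2-neighborly polytope is a triangle: if `P` is the
convex hull of a finite set `S` such that the segment between any two distinct points of
`S` is a face of `P`, then every closed convex face of `P` whose vector span is
two-dimensional is a triangle. -/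
theorem stmt_17 (n : ℕ)
    (S : Finset (EuclideanSpace ℝ (Fin n)))
    (P : Set (EuclideanSpace ℝ (Fin n)))
    (hP : P = convexHull ℝ (S : Set (EuclideanSpace ℝ (Fin n))))
    (hneigh : ∀ u ∈ S, ∀ v ∈ S, u ≠ v → IsExtreme ℝ P (segment ℝ u v))
    (F : Set (EuclideanSpace ℝ (Fin n)))
    (hFc : IsClosed F) (hFconv : Convex ℝ F)
    (hF : IsExtreme ℝ P F)
    (hdim : Module.finrank ℝ (vectorSpan ℝ F) = 2) :
    ∃ a b c : EuclideanSpace ℝ (Fin n),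
      AffineIndependent ℝ ![a, b, c] ∧ F = convexHull ℝ {a, b, c} := by
  subst hP
  set E := F.extremePoints ℝ
  have hEfin : E.Finite := S.finite_toSet.subset hF.extremePoints_subset_of_convexHull_s17
  have hFcompact : IsCompact F :=
    (S.finite_toSet.isCompact_convexHull (𝕜 := ℝ)).of_isClosed_subset hFc hF.subset
  have hFE : F = convexHull ℝ E := by
    rw [← (hEfin.isClosed_convexHull ℝ).closure_eq,
      closure_convexHull_extremePoints hFcompact hFconv]
  have hdimE : finrank ℝ (vectorSpan ℝ E) = 2 := by
    rwa [← direction_affineSpan, ← affineSpan_convexHull, ← hFE, direction_affineSpan]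
  obtain ⟨a, b, c, habc, hE⟩ :=
    (hF.isTwoNeighborly hneigh hFconv).exists_extremePoints_eq_triple hFconv hEfin hdimE
  exact ⟨a, b, c, habc, hE ▸ hFE⟩
end
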